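/- arXiv:2101.06566 — 10 statements merged into one kernel-verified Lean document; each statement's English description precedes it below -/
import Mathlib

section
/- Let F be a real topological vector space whose topology is Fréchet–Urysohn (i.e., the closure of every subset equals its sequential closure), and let G be a real seminormed space. Then the product space F × G is Fréchet–Urysohn. -/
/-!
Being Fréchet–Urysohn passes to and from the separation quotient, so we may assume `F` Hausdorff.
Given `(a, b)` in the closure of `s` and a decreasing countable basis `V n` of neighbourhoods of
`b`, the point `a` lies in the closure of each slice `{f | ∃ g ∈ V n, (f, g) ∈ s}`, hence is the
limit of a sequence `x n` in it. It remains to extract a diagonal sequence `x (m j) (k j) → a`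
with `m j → ∞`. For this, push the `n`-th sequence off by `ε n • c` with `ε n → 0`, choosing the
countably many `ε n` so that `a` is not in the compact set `ε n • c + insert a (range (x n))`. A
sequence from the union of the pushed sequences tending to `a` can then meet each of these
closed sets only finitely often, which forces `m j → ∞`.
-/

open Filter Topology Set

theorem Topology.IsInducing.frechetUrysohnSpace_of_surjective {X Y : Type*}
    [TopologicalSpace X] [TopologicalSpace Y] [FrechetUrysohnSpace X] {f : X → Y}
    (hf : IsInducing f) (hsurj : Function.Surjective f) : FrechetUrysohnSpace Y := by
  refine ⟨fun s y hy => ?_⟩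
  obtain ⟨x, rfl⟩ := hsurj y
  have hx : x ∈ closure (f ⁻¹' s) := by
    rwa [hf.closure_eq_preimage_closure_image, image_preimage_eq _ hsurj]
  obtain ⟨u, hu, hux⟩ := mem_closure_iff_seq_limit.mp hx
  exact ⟨f ∘ u, hu, (hf.continuous.tendsto x).comp hux⟩

theorem tendsto_atTop_of_tendsto_of_mem_isClosed {ι X : Type*} [TopologicalSpace X]
    {K : ℕ → Set X} {a : X} (hK : ∀ m, IsClosed (K m)) (ha : ∀ m, a ∉ K m)
    {l : Filter ι} {z : ι → X} {n : ι → ℕ} (hz : Tendsto z l (𝓝 a))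
    (hzK : ∀ i, z i ∈ K (n i)) : Tendsto n l atTop := by
  refine tendsto_atTop.2 fun b => ?_
  have hclosed : IsClosed (⋃ m < b, K m) :=
    (finite_lt_nat b).isClosed_biUnion fun m _ => hK m
  have haK : a ∉ ⋃ m < b, K m := by simpa only [mem_iUnion, not_exists] using fun m _ => ha m
  filter_upwards [hz.eventually (hclosed.isOpen_compl.mem_nhds haK)] with i hi
  by_contra hlt
  exact hi (mem_biUnion (not_le.mp hlt) (hzK i))

theorem exists_mem_Ioo_smul_notMem {E : Type*} [AddCommGroup E] [Module ℝ E] {S : Set E}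
    (hS : S.Countable) {c : E} (hc : c ≠ 0) {δ : ℝ} (hδ : 0 < δ) :
    ∃ ε ∈ Ioo 0 δ, ε • c ∉ S := by
  obtain ⟨ε, hεS, hε⟩ := ((hS.preimage (smul_left_injective ℝ hc)).dense_compl ℝ).exists_mem_open
    isOpen_Ioo (nonempty_Ioo.2 hδ)
  exact ⟨ε, hε, hεS⟩

section TopologicalVectorSpace

variable {F : Type*} [AddCommGroup F] [Module ℝ F] [TopologicalSpace F]
  [IsTopologicalAddGroup F] [ContinuousSMul ℝ F] [FrechetUrysohnSpace F] [T2Space F]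

theorem exists_tendsto_atTop_and_tendsto_diagonal {x : ℕ → ℕ → F} {a : F}
    (hx : ∀ n, Tendsto (x n) atTop (𝓝 a)) :
    ∃ m k : ℕ → ℕ, Tendsto m atTop atTop ∧ Tendsto (fun j => x (m j) (k j)) atTop (𝓝 a) := by
  rcases subsingleton_or_nontrivial F with hF | hF
  · exact ⟨id, id, tendsto_id, by simpa only [Subsingleton.elim _ a] using tendsto_const_nhds⟩
  obtain ⟨c, hc⟩ := exists_ne (0 : F)
  choose ε hε hεx using fun n : ℕ =>
    exists_mem_Ioo_smul_notMem (countable_range fun k => a - x n k) hc Nat.one_div_pos_of_nat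
  have hεc : Tendsto (fun n => ε n • c) atTop (𝓝 0) := by
    simpa using (squeeze_zero (fun n => (hε n).1.le) (fun n => (hε n).2.le)
      tendsto_one_div_add_atTop_nhds_zero_nat).smul_const c
  set K : ℕ → Set F := fun n => (ε n • c + ·) '' insert a (range (x n))
  have hK : ∀ n, IsClosed (K n) := fun n =>
    ((hx n).isCompact_insert_range.image (continuous_const_add _)).isClosed
  have haK : ∀ n, a ∉ K n := by
    rintro n ⟨y, hy | ⟨k, rfl⟩, hya⟩
    · exact smul_ne_zero (hε n).1.ne' hc (by simpa [hy] using hya)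
    · exact hεx n ⟨k, sub_eq_of_eq_add hya.symm⟩
  have ha : a ∈ closure (⋃ n, range fun k => ε n • c + x n k) := by
    have hpushed : Tendsto (fun n => ε n • c + a) atTop (𝓝 a) := by
      simpa using hεc.add_const a
    rw [← closure_closure]
    refine mem_closure_of_tendsto hpushed (Eventually.of_forall fun n => ?_)
    refine closure_mono (subset_iUnion (fun n => range fun k => ε n • c + x n k) n) ?_
    exact mem_closure_of_tendsto (by simpa using (hx n).const_add (ε n • c))
      (Eventually.of_forall fun k => mem_range_self k)
  obtain ⟨z, hz, hza⟩ := mem_closure_iff_seq_limit.mp ha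
  simp only [mem_iUnion, mem_range] at hz
  choose m k hmkz using hz
  have hm : Tendsto m atTop atTop := tendsto_atTop_of_tendsto_of_mem_isClosed hK haK hza
    fun j => ⟨x (m j) (k j), Or.inr (mem_range_self _), hmkz j⟩
  refine ⟨m, k, hm, ?_⟩
  simpa [← hmkz] using hza.sub (hεc.comp hm)

theorem frechetUrysohnSpace_prod_of_firstCountable (G : Type*) [TopologicalSpace G]
    [FirstCountableTopology G] : FrechetUrysohnSpace (F × G) := by
  refine ⟨fun s ⟨a, b⟩ hab => ?_⟩
  obtain ⟨V, hV⟩ := (𝓝 b).exists_antitone_basis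
  have hslice : ∀ n, a ∈ closure {f | ∃ g ∈ V n, (f, g) ∈ s} := fun n =>
    mem_closure_iff_nhds.2 fun U hU => by
      obtain ⟨⟨f, g⟩, ⟨hf, hg⟩, hfg⟩ :=
        mem_closure_iff_nhds.1 hab _ (prod_mem_nhds hU (hV.mem n))
      exact ⟨f, hf, g, hg, hfg⟩
  choose x hxs hxa using fun n => mem_closure_iff_seq_limit.mp (hslice n)
  obtain ⟨m, k, hm, hxmk⟩ := exists_tendsto_atTop_and_tendsto_diagonal hxa
  choose g hgV hgs using fun j => hxs (m j) (k j)
  have hgb : Tendsto g atTop (𝓝 b) :=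
    (hV.tendsto_smallSets.comp hm).of_smallSets (Eventually.of_forall hgV)
  exact ⟨fun j => (x (m j) (k j), g j), hgs, hxmk.prodMk_nhds hgb⟩

end TopologicalVectorSpace

theorem frechetUrysohn_prod_of_seminormed_general
    (F G : Type*)
    [AddCommGroup F] [Module ℝ F] [TopologicalSpace F]
    [IsTopologicalAddGroup F] [ContinuousSMul ℝ F] [FrechetUrysohnSpace F]
    [SeminormedAddCommGroup G] :
    FrechetUrysohnSpace (F × G) := by
  have : FrechetUrysohnSpace (SeparationQuotient F) :=
    SeparationQuotient.isInducing_mk.frechetUrysohnSpace_of_surjective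
      SeparationQuotient.surjective_mk
  have := frechetUrysohnSpace_prod_of_firstCountable (F := SeparationQuotient F) G
  exact (SeparationQuotient.isInducing_mk.prodMap IsInducing.id).frechetUrysohnSpace

/-- If `F` is a real topological vector space which is Fréchet–Urysohn and `G` is a real
seminormed space, then `F × G` is Fréchet–Urysohn. -/
theorem frechetUrysohn_prod_of_seminormed
    (F G : Type*)
    [AddCommGroup F] [Module ℝ F] [TopologicalSpace F]
    [IsTopologicalAddGroup F] [ContinuousSMul ℝ F] [FrechetUrysohnSpace F]
    [SeminormedAddCommGroup G] [NormedSpace ℝ G] :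
    FrechetUrysohnSpace (F × G) :=
  frechetUrysohn_prod_of_seminormed_general F G
end

section
/- Let E be a real normed space and let τ and π be two linear topologies on E, each weaker than the norm topology. The following are equivalent: (i) 0 does not lie in the closure of the unit sphere S_E = {e ∈ E : ‖e‖ = 1} with respect to the topology τ ∨ π (the coarsest topology refining both τ and π); (ii) there exist a τ-open neighborhood U of 0 and a π-open neighborhood V of 0 such that U ∩ V ∩ S_E = ∅; (iii) τ ∨ π equals the norm topology on E. -/
/-! (i) ⇔ (ii) is the description of the `τ ⊓ π`-neighbourhoods of `0` as the sets containing
some `U ∩ V`. For (i) ⇒ (iii), a balanced `τ ⊓ π`-neighbourhood of `0` missing the unit sphere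
lies inside the open unit ball, since any of its points of norm `≥ 1` could be rescaled onto the
sphere without leaving it; hence the norm is `τ ⊓ π`-continuous and `τ ⊓ π` refines the norm
topology, while the weakness of `τ` and `π` gives the reverse comparison. -/

open Topology

/-- The norm topology on a seminormed group (the topology of its canonical uniformity). -/
def normTopology (E : Type*) [SeminormedAddCommGroup E] : TopologicalSpace E :=
  UniformSpace.toTopologicalSpace

theorem notMem_closure_inf_iff {X : Type*} (τ π : TopologicalSpace X) (x : X) (s : Set X) :
    x ∉ closure[τ ⊓ π] s ↔ ∃ U V : Set X, IsOpen[τ] U ∧ x ∈ U ∧ IsOpen[π] V ∧ x ∈ V ∧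
      U ∩ V ∩ s = ∅ := by
  have basis : (@nhds X (τ ⊓ π) x).HasBasis
      (fun UV : Set X × Set X ↦ (x ∈ UV.1 ∧ IsOpen[τ] UV.1) ∧ x ∈ UV.2 ∧ IsOpen[π] UV.2)
      (fun UV ↦ UV.1 ∩ UV.2) := by
    rw [nhds_inf (t₁ := τ)]
    exact (@nhds_basis_opens X τ x).inf (@nhds_basis_opens X π x)
  rw [@mem_closure_iff_nhds_basis X (τ ⊓ π) _ _ _ _ _ basis]
  simp [Set.eq_empty_iff_forall_notMem, and_assoc, and_comm]

namespace Seminorm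

variable {F : Type*} [AddCommGroup F] [Module ℝ F]

theorem subset_ball_zero_one_of_balanced (p : Seminorm ℝ F) {B : Set F} (hB : Balanced ℝ B)
    (hBS : ∀ x ∈ B, p x ≠ 1) : B ⊆ p.ball 0 1 := by
  intro x hx
  rw [mem_ball_zero]
  by_contra! hpx
  have hpx₀ : 0 < p x := one_pos.trans_le hpx
  have hinv : ‖(p x)⁻¹‖ = (p x)⁻¹ := Real.norm_of_nonneg (inv_nonneg.mpr hpx₀.le)
  refine hBS ((p x)⁻¹ • x) (hB.smul_mem ?_ hx) ?_
  · exact hinv.le.trans (inv_le_one_of_one_le₀ hpx)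
  · rw [map_smul_eq_mul, hinv, inv_mul_cancel₀ hpx₀.ne']

variable [TopologicalSpace F] [IsTopologicalAddGroup F] [ContinuousSMul ℝ F]

theorem continuous_of_zero_notMem_closure_sphere (p : Seminorm ℝ F)
    (h : (0 : F) ∉ closure {x | p x = 1}) : Continuous p := by
  rw [mem_closure_iff_nhds_basis (nhds_basis_balanced ℝ F)] at h
  push Not at h
  obtain ⟨B, ⟨hB, hBbal⟩, hBS⟩ := h
  exact p.continuous (Filter.mem_of_superset hB
    (p.subset_ball_zero_one_of_balanced hBbal fun x hx hpx ↦ hBS x hpx hx))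

end Seminorm

theorem zero_notMem_closure_sphere_normTopology {E : Type*} [SeminormedAddCommGroup E] :
    (0 : E) ∉ closure[normTopology E] {e : E | ‖e‖ = 1} := fun h ↦ by
  simpa using (isClosed_eq continuous_norm continuous_const).closure_subset h

theorem le_normTopology_of_continuous_norm {E : Type*} [SeminormedAddCommGroup E]
    (σ : TopologicalSpace E) (hσ : @IsTopologicalAddGroup E σ _)
    (hnorm : Continuous[σ, _] (‖·‖ : E → ℝ)) : σ ≤ normTopology E := by
  rw [le_iff_nhds]
  intro x
  refine Metric.nhds_basis_ball.ge_iff.mpr fun ε hε ↦ ?_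
  have hball : IsOpen[σ] (Metric.ball x ε) := by
    let := σ
    have hdist : Continuous fun y ↦ dist y x := by
      simpa only [dist_eq_norm, Function.comp_def] using hnorm.comp (continuous_sub_right x)
    exact isOpen_lt hdist continuous_const
  exact @IsOpen.mem_nhds _ σ _ _ hball (Metric.mem_ball_self hε)

theorem le_normTopology_of_zero_notMem_closure_sphere {E : Type*} [SeminormedAddCommGroup E]
    [NormedSpace ℝ E] (σ : TopologicalSpace E) (hσgrp : @IsTopologicalAddGroup E σ _)
    (hσsmul : @ContinuousSMul ℝ E _ _ σ) (h : (0 : E) ∉ closure[σ] {e : E | ‖e‖ = 1}) :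
    σ ≤ normTopology E :=
  le_normTopology_of_continuous_norm σ hσgrp
    (@Seminorm.continuous_of_zero_notMem_closure_sphere E _ _ σ hσgrp hσsmul (normSeminorm ℝ E) h)

/-- Theorem: for two linear topologies `τ`, `π` on a real normed space `E`, each weaker
(coarser) than the norm topology, the following are equivalent:
(i) `0` is not in the closure of the unit sphere with respect to the coarsest topology
refining both `τ` and `π` (which, in Mathlib's order on topologies where smaller means finer,
is the infimum `τ ⊓ π`);
(ii) there are a `τ`-open neighborhood `U` of `0` and a `π`-open neighborhood `V` of `0`
with `U ∩ V ∩ S_E = ∅`;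
(iii) the coarsest topology refining both `τ` and `π` is the norm topology. -/
theorem complementary_topologies_tfae
    {E : Type*} [NormedAddCommGroup E] [NormedSpace ℝ E]
    (τ π : TopologicalSpace E)
    (hτgrp : @IsTopologicalAddGroup E τ _) (hτsmul : @ContinuousSMul ℝ E _ _ τ)
    (hτweak : ∀ s : Set E, IsOpen[τ] s → IsOpen[normTopology E] s)
    (hπgrp : @IsTopologicalAddGroup E π _) (hπsmul : @ContinuousSMul ℝ E _ _ π)
    (hπweak : ∀ s : Set E, IsOpen[π] s → IsOpen[normTopology E] s) :
    List.TFAE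
      [ (0 : E) ∉ @closure E (τ ⊓ π) {e : E | ‖e‖ = 1},
        ∃ U V : Set E, IsOpen[τ] U ∧ (0 : E) ∈ U ∧ IsOpen[π] V ∧ (0 : E) ∈ V ∧
          U ∩ V ∩ {e : E | ‖e‖ = 1} = ∅,
        τ ⊓ π = normTopology E ] := by
  tfae_have 1 ↔ 2 := notMem_closure_inf_iff τ π 0 _
  tfae_have 1 → 3 := fun h ↦ le_antisymm
    (le_normTopology_of_zero_notMem_closure_sphere (τ ⊓ π) (topologicalAddGroup_inf hτgrp hπgrp)
      (continuousSMul_inf (t₁ := τ) (t₂ := π)) h)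
    (le_inf (isOpen_implies_isOpen_iff.mp hτweak) (isOpen_implies_isOpen_iff.mp hπweak))
  tfae_have 3 → 1 := fun h ↦ h ▸ zero_notMem_closure_sphere_normTopology
  tfae_finish
end

section
/- Let E be a real normed space, let τ be a linear topology on E weaker than the norm topology, and let ρ be a continuous seminorm on E, with π the topology induced by ρ. Then τ ∨ π equals the norm topology on E if and only if there exists δ > 0 such that 0 is τ-separated from the set {e ∈ E : ‖e‖ = 1, ρ(e) ≤ δ}. -/
open Topology

/-!
A neighbourhood of `0` in `τ ⊓ π` contains a set `V ∩ {ρ < ε}` with `V` a `τ`-neighbourhood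
of `0`. If the unit ball contains such a set, then `V` misses the unit vectors with
`ρ ≤ ε / 2`. Conversely, if a `τ`-neighbourhood `U` of `0` misses the unit vectors with `ρ ≤ δ`,
then so does its balanced core `W`, and rescaling shows that `W ∩ {ρ < δ}` lies in the unit
ball; translates of dilates of this set then refine every norm ball.
-/

open Filter Set Pointwise

namespace Seminorm

variable {𝕜 E : Type*}

section NormedField

variable [NormedField 𝕜] [AddCommGroup E] [Module 𝕜 E]

theorem hasBasis_nhds_ball_of_isOpen_iff {ρ : Seminorm 𝕜 E} {π : TopologicalSpace E}
    (hπ : ∀ s : Set E, IsOpen[π] s ↔ ∀ x ∈ s, ∃ ε > 0, {y : E | ρ (y - x) < ε} ⊆ s) (x : E) :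
    (@nhds E π x).HasBasis (fun ε : ℝ => 0 < ε) (ρ.ball x) := by
  have isOpen_ball : ∀ ε, IsOpen[π] (ρ.ball x ε) := by
    refine fun ε => (hπ _).2 fun y hy => ⟨ε - ρ (y - x), sub_pos.2 hy, fun z hz => ?_⟩
    calc ρ (z - x) = ρ ((z - y) + (y - x)) := by rw [sub_add_sub_cancel]
      _ ≤ ρ (z - y) + ρ (y - x) := map_add_le_add ρ _ _
      _ < ε := by linarith [show ρ (z - y) < ε - ρ (y - x) from hz]
  refine ⟨fun s => ⟨fun hs => ?_, fun ⟨ε, hε, hεs⟩ => ?_⟩⟩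
  · obtain ⟨t, hts, ht, hxt⟩ := mem_nhds_iff.1 hs
    obtain ⟨ε, hε, hεt⟩ := (hπ t).1 ht x hxt
    exact ⟨ε, hε, hεt.trans hts⟩
  · exact mem_of_superset ((isOpen_ball ε).mem_nhds (ρ.mem_ball_self hε)) hεs

theorem exists_isOpen_inter_eq_empty_of_ball_mem_nhds_inf [TopologicalSpace E]
    {q ρ : Seminorm 𝕜 E} {F : Filter E} (hF : F.HasBasis (fun ε : ℝ => 0 < ε) (ρ.ball 0))
    (h : q.ball 0 1 ∈ 𝓝 0 ⊓ F) :
    ∃ δ > 0, ∃ U : Set E, IsOpen U ∧ 0 ∈ U ∧ U ∩ {e | q e = 1 ∧ ρ e ≤ δ} = ∅ := by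
  obtain ⟨V, hV, P, hP, hVP⟩ := mem_inf_iff_superset.1 h
  obtain ⟨ε, hε, hεP⟩ := hF.mem_iff.1 hP
  obtain ⟨U, hUV, hU, hU0⟩ := mem_nhds_iff.1 hV
  refine ⟨ε / 2, half_pos hε, U, hU, hU0, eq_empty_of_forall_notMem ?_⟩
  rintro e ⟨heU, hqe, hρe⟩
  have he : e ∈ q.ball 0 1 :=
    hVP ⟨hUV heU, hεP (ρ.mem_ball_zero.2 (hρe.trans_lt (half_lt_self hε)))⟩
  exact (q.mem_ball_zero.1 he).ne hqe

theorem ball_mem_nhds_of_continuous {E : Type*} [SeminormedAddCommGroup E] [Module 𝕜 E]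
    {p : Seminorm 𝕜 E} (hp : Continuous p) (x : E) {r : ℝ} (hr : 0 < r) : p.ball x r ∈ 𝓝 x :=
  (isOpen_lt (hp.comp (continuous_sub_right x)) continuous_const).mem_nhds (p.mem_ball_self hr)

end NormedField

section RCLike

variable [RCLike 𝕜] [AddCommGroup E] [Module 𝕜 E]

theorem inter_ball_zero_subset_of_balanced {q ρ : Seminorm 𝕜 E} {W : Set E}
    (hW : Balanced 𝕜 W) {δ : ℝ} (hsep : W ∩ {e | q e = 1 ∧ ρ e ≤ δ} = ∅) :
    W ∩ ρ.ball 0 δ ⊆ q.ball 0 1 := by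
  rintro e ⟨heW, heδ⟩
  rw [mem_ball_zero] at heδ ⊢
  by_contra! hqe
  set c : 𝕜 := (((q e)⁻¹ : ℝ) : 𝕜)
  have hc : ‖c‖ = (q e)⁻¹ := by
    rw [RCLike.norm_ofReal, abs_of_nonneg (inv_nonneg.2 (apply_nonneg q e))]
  have hc_le : ‖c‖ ≤ 1 := hc ▸ inv_le_one_of_one_le₀ hqe
  have hmem : c • e ∈ W ∩ {e | q e = 1 ∧ ρ e ≤ δ} := by
    refine ⟨hW.smul_mem hc_le heW, ?_, ?_⟩
    · rw [map_smul_eq_mul, hc, inv_mul_cancel₀ (by linarith)]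
    · rw [map_smul_eq_mul]
      exact (mul_le_of_le_one_left (apply_nonneg ρ e) hc_le).trans heδ.le
  exact hsep.subset hmem

theorem exists_mem_nhds_inter_ball_subset_ball [TopologicalSpace E] [ContinuousAdd E]
    [ContinuousSMul 𝕜 E] {q ρ : Seminorm 𝕜 E} {U : Set E} (hU : U ∈ 𝓝 0) {δ : ℝ}
    (hsep : U ∩ {e | q e = 1 ∧ ρ e ≤ δ} = ∅) (x : E) {r : ℝ} (hr : 0 < r) :
    ∃ A ∈ 𝓝 x, A ∩ ρ.ball x (r * δ) ⊆ q.ball x r := by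
  set W := balancedCore 𝕜 U
  have hW : W ∩ ρ.ball 0 δ ⊆ q.ball 0 1 :=
    inter_ball_zero_subset_of_balanced (balancedCore_balanced U)
      (subset_eq_empty (inter_subset_inter_left _ (balancedCore_subset U)) hsep)
  have hr' : (r : 𝕜) ≠ 0 := RCLike.ofReal_ne_zero.2 hr.ne'
  have hnorm : ‖(r : 𝕜)‖ = r := by rw [RCLike.norm_ofReal, abs_of_pos hr]
  refine ⟨x +ᵥ (r : 𝕜) • W, ?_, ?_⟩
  · simpa only [vadd_mem_nhds_self, smul_zero] using
      smul_mem_nhds_smul₀ hr' (balancedCore_mem_nhds_zero (𝕜 := 𝕜) hU)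
  · calc (x +ᵥ (r : 𝕜) • W) ∩ ρ.ball x (r * δ)
        = x +ᵥ (r : 𝕜) • (W ∩ ρ.ball 0 δ) := by
          rw [smul_set_inter₀ hr', vadd_set_inter, smul_ball_zero hr', vadd_ball, hnorm,
            vadd_eq_add, add_zero]
      _ ⊆ x +ᵥ (r : 𝕜) • q.ball 0 1 := vadd_set_mono (smul_set_mono hW)
      _ = q.ball x r := by
          rw [smul_ball_zero hr', vadd_ball, hnorm, mul_one, vadd_eq_add, add_zero]

end RCLike

end Seminorm

/-- Let `τ` be a linear topology on a real normed space `E`, weaker than the norm topology,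
let `ρ` be a continuous seminorm on `E`, and let `π` be the topology induced by `ρ`
(characterized by: a set is `π`-open iff around each of its points it contains a `ρ`-ball).
Then the coarsest topology refining both `τ` and `π` (the infimum `τ ⊓ π` in Mathlib's order
on topologies) is the norm topology iff there is `δ > 0` such that `0` is `τ`-separated from
`{e : ‖e‖ = 1, ρ e ≤ δ}`. -/
theorem join_with_seminorm_topology_eq_norm_iff_separated
    {E : Type*} [NormedAddCommGroup E] [NormedSpace ℝ E]
    (τ π : TopologicalSpace E)
    (hτgrp : @IsTopologicalAddGroup E τ _) (hτsmul : @ContinuousSMul ℝ E _ _ τ)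
    (hτweak : ∀ s : Set E, IsOpen[τ] s → IsOpen[normTopology E] s)
    (ρ : Seminorm ℝ E)
    (hρ : Continuous[normTopology E, inferInstance] (ρ : E → ℝ))
    (hπ : ∀ s : Set E, IsOpen[π] s ↔ ∀ x ∈ s, ∃ ε > 0, {y : E | ρ (y - x) < ε} ⊆ s) :
    τ ⊓ π = normTopology E ↔
      ∃ δ > 0, ∃ U : Set E, IsOpen[τ] U ∧ (0 : E) ∈ U ∧
        U ∩ {e : E | ‖e‖ = 1 ∧ ρ e ≤ δ} = ∅ := by
  -- `τ` and `π` are local instances, so the norm topology is passed explicitly below.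
  have hρπ := Seminorm.hasBasis_nhds_ball_of_isOpen_iff hπ
  have hnorm_le_π : normTopology E ≤ π := (le_iff_nhds _ _).2 fun x =>
    (hρπ x).ge_iff.2 fun _ => ρ.ball_mem_nhds_of_continuous hρ x
  constructor
  · intro h
    have hball : (normSeminorm ℝ E).ball 0 1 ∈ @nhds E τ 0 ⊓ @nhds E π 0 := by
      rw [← nhds_inf, h, ball_normSeminorm]
      exact Metric.ball_mem_nhds 0 one_pos
    exact @Seminorm.exists_isOpen_inter_eq_empty_of_ball_mem_nhds_inf ℝ E _ _ _ τ _ ρ _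
      (hρπ 0) hball
  · rintro ⟨δ, hδ, U, hU, hU0, hsep⟩
    refine le_antisymm ((le_iff_nhds _ _).2 fun x => ?_)
      (le_inf (isOpen_implies_isOpen_iff.1 hτweak) hnorm_le_π)
    rw [nhds_inf (t₁ := τ) (t₂ := π)]
    refine Metric.nhds_basis_ball.ge_iff.2 fun r hr => ?_
    obtain ⟨A, hA, hAρ⟩ := @Seminorm.exists_mem_nhds_inter_ball_subset_ball ℝ E _ _ _ τ
      hτgrp.toContinuousAdd hτsmul (normSeminorm ℝ E) ρ U (@IsOpen.mem_nhds E τ 0 U hU hU0) δ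
      hsep x r hr
    rw [ball_normSeminorm] at hAρ
    exact mem_inf_of_inter hA ((hρπ x).mem_of_mem (mul_pos hr hδ)) hAρ
end

section
/- Let E be a real normed space and let τ be a linear topology on E weaker than the norm topology. The following are equivalent: (i) τ equals the norm topology; (ii) 0 is τ-separated from the unit sphere S_E = {e ∈ E : ‖e‖ = 1}; (iii) the closed unit ball of E is not contained in the τ-closure of S_E. -/
/-!
If some point `x` of the closed unit ball lies outside the `τ`-closure of the unit sphere, take a
balanced `τ`-neighbourhood `W` of `0` with `x + W` missing the sphere. Every segment from `x`
to a point of `x + W` stays in `x + W`, so by the intermediate value theorem `W` lies in the ball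
of radius `2`. A `τ`-neighbourhood of `0` inside a norm ball makes all norm balls around `0`
`τ`-neighbourhoods (rescale it), so `τ` is the norm topology.
-/

open Topology

open Pointwise

section

variable {E : Type*} [NormedAddCommGroup E] [NormedSpace ℝ E]

open Metric Set

lemma exists_mem_Icc_norm_add_smul_eq {x w : E} {r : ℝ} (hx : ‖x‖ ≤ r) (hw : r ≤ ‖x + w‖) :
    ∃ t ∈ Icc (0 : ℝ) 1, ‖x + t • w‖ = r := by
  have hcont : ContinuousOn (fun t : ℝ => ‖x + t • w‖) (Icc 0 1) := by fun_prop
  exact intermediate_value_Icc zero_le_one hcont (by simpa using And.intro hx hw)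

lemma Balanced.subset_ball_of_norm_add_ne {x : E} {r : ℝ} (hx : ‖x‖ ≤ r) {W : Set E}
    (hW : Balanced ℝ W) (hWx : ∀ w ∈ W, ‖x + w‖ ≠ r) : W ⊆ ball 0 (2 * r) := by
  intro w hwW
  rw [mem_ball_zero_iff]
  by_contra! hw
  have hxw : r ≤ ‖x + w‖ := by
    have := norm_sub_norm_le w (-x)
    rw [sub_neg_eq_add, add_comm, norm_neg] at this
    linarith
  obtain ⟨t, ⟨ht0, ht1⟩, hxt⟩ := exists_mem_Icc_norm_add_smul_eq hx hxw
  have htw : t • w ∈ W := hW.smul_mem (by rwa [Real.norm_of_nonneg ht0]) hwW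
  exact hWx _ htw hxt

lemma exists_mem_nhds_zero_subset_ball_of_notMem_closure_sphere (τ : TopologicalSpace E)
    (hτgrp : @IsTopologicalAddGroup E τ _) (hτsmul : @ContinuousSMul ℝ E _ _ τ)
    {x : E} (hx : ‖x‖ ≤ 1) (hxS : x ∉ @closure E τ {e : E | ‖e‖ = 1}) :
    ∃ W ∈ @nhds E τ 0, W ⊆ ball 0 2 := by
  let := τ
  have hV : (closure {e : E | ‖e‖ = 1})ᶜ ∈ 𝓝 (x + 0) := by
    simpa using isClosed_closure.isOpen_compl.mem_nhds hxS
  have hV0 := (continuous_const_add x).continuousAt.preimage_mem_nhds hV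
  obtain ⟨W, ⟨hW0, hWbal⟩, hWV⟩ := (nhds_basis_balanced ℝ E).mem_iff.mp hV0
  have hWx : ∀ w ∈ W, ‖x + w‖ ≠ 1 := fun w hw hxw => hWV hw (subset_closure hxw)
  exact ⟨W, hW0, by simpa using hWbal.subset_ball_of_norm_add_ne hx hWx⟩

lemma eq_normTopology_of_mem_nhds_zero_subset_ball (τ : TopologicalSpace E)
    (hτgrp : @IsTopologicalAddGroup E τ _) (hτsmul : @ContinuousSMul ℝ E _ _ τ)
    (hτweak : normTopology E ≤ τ) {W : Set E} (hW : W ∈ @nhds E τ 0) {R : ℝ}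
    (hWR : W ⊆ ball 0 R) : τ = normTopology E := by
  have hR : 0 < R := by simpa using hWR (@mem_of_mem_nhds E τ _ _ hW)
  have hnorm : @IsTopologicalAddGroup E (normTopology E) _ := by
    unfold normTopology; infer_instance
  refine IsTopologicalAddGroup.ext hτgrp hnorm (le_antisymm ?_ (nhds_mono hτweak))
  let := τ
  refine (nhds_basis_ball (x := (0 : E))).ge_iff.mpr fun ε hε => ?_
  have hc : ε / R ≠ 0 := by positivity
  refine Filter.mem_of_superset ((set_smul_mem_nhds_zero_iff hc).mpr hW) ?_
  calc (ε / R) • W ⊆ (ε / R) • ball (0 : E) R := smul_set_mono hWR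
    _ = ball 0 ε := by
      rw [_root_.smul_ball hc, smul_zero, Real.norm_of_nonneg (by positivity),
        div_mul_cancel₀ _ hR.ne']

end

/-- For a linear topology `τ` on a real normed space `E`, weaker than the norm topology,
the following are equivalent: (i) `τ` is the norm topology; (ii) `0` is `τ`-separated from
the unit sphere; (iii) the closed unit ball is not contained in the `τ`-closure of the
unit sphere. -/
theorem topology_eq_norm_iff_separated_from_sphere
    {E : Type*} [NormedAddCommGroup E] [NormedSpace ℝ E]
    (τ : TopologicalSpace E)
    (hτgrp : @IsTopologicalAddGroup E τ _) (hτsmul : @ContinuousSMul ℝ E _ _ τ)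
    (hτweak : ∀ s : Set E, IsOpen[τ] s → IsOpen[normTopology E] s) :
    List.TFAE
      [ τ = normTopology E,
        ∃ U : Set E, IsOpen[τ] U ∧ (0 : E) ∈ U ∧ U ∩ {e : E | ‖e‖ = 1} = ∅,
        ¬ Metric.closedBall (0 : E) 1 ⊆ @closure E τ {e : E | ‖e‖ = 1} ] := by
  tfae_have 1 → 2 := by
    rintro rfl
    refine ⟨Metric.ball 0 1, Metric.isOpen_ball, Metric.mem_ball_self one_pos, ?_⟩
    exact Set.eq_empty_of_forall_notMem fun e ⟨he, he1⟩ => by simp_all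
  tfae_have 2 → 3 := by
    rintro ⟨U, hUo, hU0, hUS⟩ hball
    have h0 := @mem_closure_iff E τ _ _ |>.mp (hball (Metric.mem_closedBall_self zero_le_one))
    exact (h0 U hUo hU0).ne_empty hUS
  tfae_have 3 → 1 := by
    intro h
    obtain ⟨x, hx, hxS⟩ := Set.not_subset.mp h
    obtain ⟨W, hW, hW2⟩ := exists_mem_nhds_zero_subset_ball_of_notMem_closure_sphere τ hτgrp
      hτsmul (mem_closedBall_zero_iff.mp hx) hxS
    exact eq_normTopology_of_mem_nhds_zero_subset_ball τ hτgrp hτsmul hτweak hW hW2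
  tfae_finish
end

section
/- Let E be a real normed space, let τ be a linear topology on E weaker than the norm topology, and let F be a real normed space. Suppose T : E → F is a continuous linear operator and δ > 0 is such that 0 is τ-separated from {e ∈ E : ‖e‖ = 1, ‖Te‖ ≤ δ}. Then every continuous linear operator S : E → F with ‖T − S‖ < δ is τ-complementary. Consequently, the set of τ-complementary operators is open in the space L(E, F) of continuous linear operators with the operator norm. -/
open Topology

/-- The space `L(E, F)` of norm-continuous linear operators between normed spaces,
with the operator norm. (This abbreviation is elaborated with the norm topologies, so that
it is unaffected by auxiliary topologies present in the local context.) -/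
abbrev CLM (E F : Type*) [NormedAddCommGroup E] [NormedSpace ℝ E]
    [NormedAddCommGroup F] [NormedSpace ℝ F] := E →L[ℝ] F

/-- A norm-continuous linear operator `S : E → F` is `τ`-complementary if there is `δ > 0`
such that `0` is `τ`-separated from `{e : ‖e‖ = 1, ‖S e‖ ≤ δ}`. -/
def IsTauComplementaryOp {E F : Type*} [NormedAddCommGroup E] [NormedSpace ℝ E]
    [NormedAddCommGroup F] [NormedSpace ℝ F] (τ : TopologicalSpace E)
    (S : CLM E F) : Prop :=
  ∃ δ > 0, ∃ U : Set E, IsOpen[τ] U ∧ (0 : E) ∈ U ∧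
    U ∩ {e : E | ‖e‖ = 1 ∧ ‖S e‖ ≤ δ} = ∅

theorem ContinuousLinearMap.norm_apply_le_norm_sub_add_norm_apply {𝕜 E F : Type*}
    [NontriviallyNormedField 𝕜] [SeminormedAddCommGroup E] [SeminormedAddCommGroup F]
    [NormedSpace 𝕜 E] [NormedSpace 𝕜 F] (T S : E →L[𝕜] F) {e : E} (he : ‖e‖ = 1) :
    ‖T e‖ ≤ ‖T - S‖ + ‖S e‖ :=
  calc ‖T e‖ ≤ ‖T e - S e‖ + ‖S e‖ := norm_le_norm_sub_add _ _
    _ ≤ ‖T - S‖ + ‖S e‖ := by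
      gcongr
      exact (T - S).unit_le_opNorm e he.le

section

variable {E F : Type*} [NormedAddCommGroup E] [NormedSpace ℝ E]
  [NormedAddCommGroup F] [NormedSpace ℝ F] (τ : TopologicalSpace E)

/-- Perturbing `T` by less than `δ` keeps the same `τ`-neighbourhood of `0`, with the margin
`δ - ‖T - S‖`. -/
theorem isTauComplementaryOp_of_norm_sub_lt {T S : CLM E F} {δ : ℝ}
    (hsep : ∃ U : Set E, IsOpen[τ] U ∧ (0 : E) ∈ U ∧
      U ∩ {e : E | ‖e‖ = 1 ∧ ‖T e‖ ≤ δ} = ∅)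
    (hTS : ‖T - S‖ < δ) : IsTauComplementaryOp τ S := by
  obtain ⟨U, hU, hU0, hdisj⟩ := hsep
  refine ⟨δ - ‖T - S‖, sub_pos.2 hTS, U, hU, hU0, Set.eq_empty_of_subset_empty ?_⟩
  rintro e ⟨heU, he, hSe⟩
  rw [← hdisj]
  refine ⟨heU, he, ?_⟩
  linarith [T.norm_apply_le_norm_sub_add_norm_apply S he]

theorem isOpen_setOf_isTauComplementaryOp :
    IsOpen[normTopology (CLM E F)] {S : CLM E F | IsTauComplementaryOp τ S} := by
  change IsOpen {S : CLM E F | IsTauComplementaryOp τ S}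
  rw [Metric.isOpen_iff]
  rintro T ⟨δ, hδ, hsep⟩
  refine ⟨δ, hδ, fun S hS => isTauComplementaryOp_of_norm_sub_lt τ hsep ?_⟩
  rwa [Metric.mem_ball, dist_comm, dist_eq_norm] at hS

end

theorem tau_complementary_operators_open_general
    {E F : Type*} [NormedAddCommGroup E] [NormedSpace ℝ E]
    [NormedAddCommGroup F] [NormedSpace ℝ F]
    (τ : TopologicalSpace E)
    (T : CLM E F) (δ : ℝ)
    (hsep : ∃ U : Set E, IsOpen[τ] U ∧ (0 : E) ∈ U ∧
      U ∩ {e : E | ‖e‖ = 1 ∧ ‖T e‖ ≤ δ} = ∅) :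
    (∀ S : CLM E F, ‖T - S‖ < δ → IsTauComplementaryOp τ S) ∧
    IsOpen[normTopology (CLM E F)] {S : CLM E F | IsTauComplementaryOp τ S} :=
  ⟨fun _ => isTauComplementaryOp_of_norm_sub_lt τ hsep, isOpen_setOf_isTauComplementaryOp τ⟩

/-- Let `τ` be a linear topology on a real normed space `E`, weaker than the norm topology,
and let `T : E → F` be continuous linear with `δ > 0` such that `0` is `τ`-separated from
`{e : ‖e‖ = 1, ‖T e‖ ≤ δ}`. Then every `S` with `‖T − S‖ < δ` is `τ`-complementary;
consequently, the set of `τ`-complementary operators is open in `L(E, F)`. -/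
theorem tau_complementary_operators_open
    {E F : Type*} [NormedAddCommGroup E] [NormedSpace ℝ E]
    [NormedAddCommGroup F] [NormedSpace ℝ F]
    (τ : TopologicalSpace E)
    (hτgrp : @IsTopologicalAddGroup E τ _) (hτsmul : @ContinuousSMul ℝ E _ _ τ)
    (hτweak : ∀ s : Set E, IsOpen[τ] s → IsOpen[normTopology E] s)
    (T : CLM E F) (δ : ℝ) (hδ : 0 < δ)
    (hsep : ∃ U : Set E, IsOpen[τ] U ∧ (0 : E) ∈ U ∧
      U ∩ {e : E | ‖e‖ = 1 ∧ ‖T e‖ ≤ δ} = ∅) :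
    (∀ S : CLM E F, ‖T - S‖ < δ → IsTauComplementaryOp τ S) ∧
    IsOpen[normTopology (CLM E F)] {S : CLM E F | IsTauComplementaryOp τ S} :=
  tau_complementary_operators_open_general τ T δ hsep
end

section
/- Let E and F be real Banach spaces, let τ be a linear topology on E weaker than the norm topology, and let T : E → F be a continuous linear operator with closed range. Then T is τ-complementary if and only if the topology induced by τ on ker T coincides with the norm topology on ker T. -/
open Topology

/-!
If a τ-neighbourhood of `0` misses the unit vectors of `ker T`, then so does a balanced one, which
therefore meets `ker T` only inside the unit ball; its rescalings show that τ and the norm give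
`ker T` the same neighbourhoods of `0`. Conversely, the open mapping theorem for `T` onto its closed
range puts every `e` within `C * ‖T e‖` of `ker T`. A unit vector `e` with `‖T e‖` small that is
τ-close to `0` would then be the sum of a norm-small vector and a τ-small, hence norm-small,
element of `ker T`, which is impossible.
-/

open Filter Pointwise

section Seminorm

variable {E : Type*} [AddCommGroup E] [Module ℝ E] (p : Seminorm ℝ E) {S : Submodule ℝ E}

theorem Balanced.seminorm_lt_one {V : Set E} (hV : Balanced ℝ V)
    (hVS : ∀ x ∈ S, x ∈ V → p x ≠ 1) {x : E} (hxS : x ∈ S) (hxV : x ∈ V) : p x < 1 := by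
  by_contra! hx
  have hpx : 0 < p x := by linarith
  refine hVS ((p x)⁻¹ • x) (S.smul_mem _ hxS) (hV.smul_mem ?_ hxV) ?_
  · rw [Real.norm_of_nonneg (by positivity)]
    exact inv_le_one_of_one_le₀ hx
  · rw [map_smul_eq_mul, Real.norm_of_nonneg (by positivity), inv_mul_cancel₀ hpx.ne']

theorem Seminorm.exists_mem_nhds_zero_lt_of_ne_one [TopologicalSpace E] [ContinuousSMul ℝ E]
    {U : Set E} (hU : U ∈ 𝓝 0) (hUS : ∀ x ∈ S, x ∈ U → p x ≠ 1) {ε : ℝ} (hε : 0 < ε) :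
    ∃ W ∈ 𝓝 (0 : E), ∀ x ∈ S, x ∈ W → p x < ε := by
  obtain ⟨V, ⟨hV, hVbal⟩, hVU⟩ := (nhds_basis_balanced ℝ E).mem_iff.mp hU
  refine ⟨ε • V, (set_smul_mem_nhds_zero_iff hε.ne').mpr hV, ?_⟩
  rintro _ hxS ⟨v, hvV, rfl⟩
  have hvS : v ∈ S := by simpa [hε.ne'] using S.smul_mem ε⁻¹ hxS
  have hv : p v < 1 := hVbal.seminorm_lt_one p (fun x hxS hxV ↦ hUS x hxS (hVU hxV)) hvS hvV
  rw [map_smul_eq_mul, Real.norm_of_nonneg hε.le]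
  simpa using mul_lt_mul_of_pos_left hv hε

end Seminorm

section Normed

variable {E F : Type*} [NormedAddCommGroup E] [NormedSpace ℝ E]
  [NormedAddCommGroup F] [NormedSpace ℝ F]

theorem induced_eq_normTopology_iff {τ : TopologicalSpace E} (hτ : @IsTopologicalAddGroup E τ _)
    (hle : normTopology E ≤ τ) (S : Submodule ℝ E) :
    TopologicalSpace.induced ((↑) : S → E) τ = normTopology S ↔
      ∀ ε > 0, ∃ W ∈ @nhds E τ 0, ∀ x ∈ S, x ∈ W → ‖x‖ < ε := by
  have hnorm : @IsTopologicalAddGroup S (normTopology S) _ := by unfold normTopology; infer_instance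
  have hind : @IsTopologicalAddGroup S (.induced (↑) τ) _ :=
    @topologicalAddGroup_induced E S τ _ hτ _ _ _ _ S.subtype
  have hnhds : @nhds S (normTopology S) 0 = comap (↑) (@nhds E (normTopology E) ((0 : S) : E)) :=
    @nhds_induced E S (normTopology E) _ _
  rw [IsTopologicalAddGroup.ext_iff hind hnorm, @nhds_induced E S τ, hnhds, le_antisymm_iff,
    and_iff_left (comap_mono (nhds_mono hle))]
  refine (Metric.nhds_basis_ball.comap _).ge_iff.trans (forall₂_congr fun ε _ ↦ ?_)
  simp [mem_comap, Set.subset_def]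

theorem ContinuousLinearMap.exists_mem_ker_norm_sub_le [CompleteSpace E] [CompleteSpace F]
    (T : E →L[ℝ] F) (hT : IsClosed (LinearMap.range (T : E →ₗ[ℝ] F) : Set F)) :
    ∃ C > 0, ∀ e, ∃ k ∈ LinearMap.ker (T : E →ₗ[ℝ] F), ‖e - k‖ ≤ C * ‖T e‖ := by
  have := hT.completeSpace_coe
  obtain ⟨C, hC, hCT⟩ := T.rangeRestrict.exists_preimage_norm_le T.surjective_rangeRestrict
  refine ⟨C, hC, fun e ↦ ?_⟩
  obtain ⟨x, hx, hxC⟩ := hCT (T.rangeRestrict e)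
  refine ⟨e - x, ?_, by rw [sub_sub_cancel]; exact hxC⟩
  simpa [sub_eq_zero] using (congrArg Subtype.val hx).symm

theorem exists_mem_nhds_zero_norm_lt_one_of_norm_apply_le {τ : TopologicalSpace E}
    (hτ : @IsTopologicalAddGroup E τ _) (hle : normTopology E ≤ τ) (T : E →ₗ[ℝ] F) {C : ℝ}
    (hC : 0 < C) (hCT : ∀ e, ∃ k ∈ LinearMap.ker T, ‖e - k‖ ≤ C * ‖T e‖)
    {W : Set E} (hW : W ∈ @nhds E τ 0) (hWT : ∀ k ∈ LinearMap.ker T, k ∈ W → ‖k‖ < 1 / 2) :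
    ∃ δ > 0, ∃ U ∈ @nhds E τ 0, ∀ e ∈ U, ‖T e‖ ≤ δ → ‖e‖ < 1 := by
  obtain ⟨U, hU, hUW⟩ := exists_nhds_half_neg hW
  obtain ⟨ε, hε, hεU⟩ := Metric.nhds_basis_closedBall.mem_iff.mp (nhds_mono hle hU)
  refine ⟨min ε (1 / 2) / C, by positivity, U, hU, fun e he heT ↦ ?_⟩
  obtain ⟨k, hk, hek⟩ := hCT e
  have hx : ‖e - k‖ ≤ min ε (1 / 2) := by
    calc ‖e - k‖ ≤ C * ‖T e‖ := hek
      _ ≤ C * (min ε (1 / 2) / C) := by gcongr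
      _ = min ε (1 / 2) := mul_div_cancel₀ _ hC.ne'
  have hkU : e - k ∈ U := hεU (mem_closedBall_zero_iff.mpr (hx.trans (min_le_left _ _)))
  have hkW : ‖k‖ < 1 / 2 := hWT k hk (by simpa using hUW e he (e - k) hkU)
  calc ‖e‖ = ‖(e - k) + k‖ := by rw [sub_add_cancel]
    _ ≤ ‖e - k‖ + ‖k‖ := norm_add_le _ _
    _ < 1 := by linarith [min_le_right ε (1 / 2)]

end Normed

/-- Let `E`, `F` be real Banach spaces, `τ` a linear topology on `E` weaker than the norm
topology, and `T : E → F` a continuous linear operator with closed range. Then `T` is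
`τ`-complementary (there is `δ > 0` such that `0` is `τ`-separated from
`{e : ‖e‖ = 1, ‖T e‖ ≤ δ}`) iff the topology induced by `τ` on `ker T` coincides with the
norm topology of `ker T`. -/
theorem closedRange_tau_complementary_iff_ker
    {E F : Type*} [NormedAddCommGroup E] [NormedSpace ℝ E] [CompleteSpace E]
    [NormedAddCommGroup F] [NormedSpace ℝ F] [CompleteSpace F]
    (τ : TopologicalSpace E)
    (hτgrp : @IsTopologicalAddGroup E τ _) (hτsmul : @ContinuousSMul ℝ E _ _ τ)
    (hτweak : ∀ s : Set E, IsOpen[τ] s → IsOpen[normTopology E] s)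
    (T : CLM E F) (hrange : IsClosed (LinearMap.range (T : E →ₗ[ℝ] F) : Set F)) :
    (∃ δ > 0, ∃ U : Set E, IsOpen[τ] U ∧ (0 : E) ∈ U ∧
      U ∩ {e : E | ‖e‖ = 1 ∧ ‖T e‖ ≤ δ} = ∅) ↔
    TopologicalSpace.induced (Subtype.val : LinearMap.ker (T : E →ₗ[ℝ] F) → E) τ =
      normTopology (LinearMap.ker (T : E →ₗ[ℝ] F)) := by
  have hle : normTopology E ≤ τ := hτweak
  rw [induced_eq_normTopology_iff hτgrp hle]
  -- `τ` is the ambient topology instance here, so `𝓝` and `IsOpen` below refer to it.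
  constructor
  · rintro ⟨δ, hδ, U, hU, hU0, hUT⟩ ε hε
    refine (normSeminorm ℝ E).exists_mem_nhds_zero_lt_of_ne_one (hU.mem_nhds hU0)
      (fun k hk hkU hk1 ↦ ?_) hε
    refine hUT.subset ⟨hkU, hk1, ?_⟩
    have hTk : T k = 0 := hk
    simpa [hTk] using hδ.le
  · intro hker
    obtain ⟨C, hC, hCT⟩ := T.exists_mem_ker_norm_sub_le hrange
    obtain ⟨W, hW, hWT⟩ := hker (1 / 2) (by norm_num)
    obtain ⟨δ, hδ, U, hU, hUT⟩ :=
      exists_mem_nhds_zero_norm_lt_one_of_norm_apply_le hτgrp hle (T : E →ₗ[ℝ] F) hC hCT hW hWT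
    obtain ⟨O, hOU, hO, hO0⟩ := mem_nhds_iff.mp hU
    refine ⟨δ, hδ, O, hO, hO0, Set.eq_empty_of_forall_notMem ?_⟩
    rintro e ⟨heO, he1, heT⟩
    exact (hUT e (hOU heO) heT).ne he1
end

section
/- Let E and F be real Banach spaces and let T : E → F be a continuous linear operator. Then T is upper semi-Fredholm (its kernel is finite-dimensional and its range is closed) if and only if for every real Banach space H and every continuous linear operator S : H → E, compactness of the composition T ∘ S implies compactness of S. -/
/-!
If `ker T` is finite-dimensional it has a closed complement `N`, and if moreover the range is
closed, `T` maps `N` isomorphically onto it (open mapping theorem). Any `S` then splits as a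
finite-rank part plus a part `S'` with values in `N` and `T ∘ S' = T ∘ S`, so `S'` is compact
as soon as `T ∘ S` is.

Conversely, the inclusion `S` of `ker T` has `T ∘ S = 0`, which forces `ker T` to be
finite-dimensional. If `T` were not bounded below on `N`, there would be unit vectors `xₙ ∈ N`
with `T xₙ → 0`. The operator `ℓ¹ → E`, `a ↦ ∑ aₙ xₙ`, becomes compact after composition with `T`
(its columns `T xₙ` tend to zero), hence is compact, and a limit point of `(xₙ)` is a unit vector
in `N ∩ ker T = 0`.
-/

universe u v

open Filter Topology Function
open scoped lp ENNReal

theorem IsCompactOperator.of_comp_isClosedEmbedding {M₁ M₂ M₃ : Type*} [Zero M₁]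
    [TopologicalSpace M₁] [TopologicalSpace M₂] [TopologicalSpace M₃] {f : M₁ → M₂} {g : M₂ → M₃}
    (hg : IsClosedEmbedding g) (hgf : IsCompactOperator (g ∘ f)) : IsCompactOperator f :=
  let ⟨K, hK, hKf⟩ := hgf
  ⟨g ⁻¹' K, hg.isCompact_preimage hK, hKf⟩

section

variable {𝕜 E F : Type*} [RCLike 𝕜] [NormedAddCommGroup E] [NormedSpace 𝕜 E]
  [NormedAddCommGroup F] [NormedSpace 𝕜 F]

namespace lp

variable {ι : Type*} [CompleteSpace E]

variable (𝕜) in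
noncomputable def sumSMulL : lp (fun _ : ι => E) ∞ →L[𝕜] lp (fun _ : ι => 𝕜) 1 →L[𝕜] E :=
  (dualPairing 1 ∞ (fun _ => ContinuousLinearMap.lsmul 𝕜 𝕜) (K := 1)
    fun _ => ContinuousLinearMap.opNorm_lsmul_le).flip

theorem sumSMulL_apply (u : lp (fun _ : ι => E) ∞) (a : lp (fun _ : ι => 𝕜) 1) :
    sumSMulL 𝕜 u a = ∑' i, a i • u i :=
  rfl

theorem sumSMulL_apply_single [DecidableEq ι] (u : lp (fun _ : ι => E) ∞) (i : ι) :
    sumSMulL 𝕜 u (lp.single 1 i 1) = u i := by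
  rw [sumSMulL_apply, tsum_eq_single i fun j hj => by simp [lp.single_apply, hj]]
  simp

theorem sumSMulL_single [DecidableEq ι] (i : ι) (v : E) :
    sumSMulL 𝕜 (lp.single ∞ i v) =
      ContinuousLinearMap.toSpanSingleton 𝕜 v ∘L evalCLM 𝕜 (fun _ : ι => 𝕜) 1 i := by
  ext a
  rw [sumSMulL_apply, tsum_eq_single i fun j hj => by simp [lp.single_apply, hj]]
  simp [evalCLM]

theorem summable_smul (u : lp (fun _ : ι => E) ∞) (a : lp (fun _ : ι => 𝕜) 1) :
    Summable fun i => a i • u i := by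
  have ha : Summable fun i => ‖a i‖ := by simpa using (lp.memℓp a).summable (by norm_num)
  refine .of_norm_bounded (ha.mul_right ‖u‖) fun i => ?_
  rw [norm_smul]
  gcongr
  exact norm_apply_le_norm (by simp) u i

theorem comp_sumSMulL [CompleteSpace F] (T : E →L[𝕜] F) (u : lp (fun _ : ι => E) ∞) :
    T ∘L sumSMulL 𝕜 u =
      sumSMulL 𝕜 (mapCLM ∞ (fun _ => T) (norm_nonneg T) (fun _ => le_rfl) u) := by
  ext a
  simp [sumSMulL_apply, T.map_tsum (summable_smul u a)]

theorem isCompactOperator_sumSMulL (u : lp (fun _ : ι => E) ∞)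
    (hu : Tendsto (⇑u) cofinite (𝓝 0)) : IsCompactOperator (sumSMulL 𝕜 u) := by
  classical
  -- the finite truncations of `u` converge to `u` in `ℓ^∞` and give finite-rank operators
  set v : Finset ι → lp (fun _ : ι => E) ∞ := fun s => ∑ i ∈ s, lp.single ∞ i (u i)
  have hv : Tendsto v atTop (𝓝 u) := by
    rw [Metric.tendsto_atTop]
    intro ε hε
    have hfin := Filter.eventually_cofinite.1 (hu.eventually (Metric.ball_mem_nhds 0 (half_pos hε)))
    refine ⟨hfin.toFinset, fun s hs => ?_⟩
    rw [dist_eq_norm]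
    refine (norm_le_of_forall_le (half_pos hε).le fun i => ?_).trans_lt (half_lt_self hε)
    rw [lp.coeFn_sub, Pi.sub_apply, lp.coeFn_sum, Finset.sum_apply]
    simp only [lp.single_apply, Finset.sum_pi_single]
    by_cases hi : i ∈ s
    · simp [hi, (half_pos hε).le]
    · have hui : ‖u i‖ < ε / 2 := not_le.1 fun h => hi (hs (by simpa using h))
      simpa [hi] using hui.le
  refine isCompactOperator_of_tendsto (((sumSMulL 𝕜).continuous.tendsto u).comp hv)
    (Eventually.of_forall fun s => ?_)
  show sumSMulL 𝕜 (v s) ∈ compactOperator (RingHom.id 𝕜) _ _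
  simp only [v, map_sum]
  refine Submodule.sum_mem _ fun i _ => ?_
  rw [sumSMulL_single]
  exact (isCompactOperator_of_locallyCompactSpace_dom (evalCLM 𝕜 (fun _ : ι => 𝕜) 1 i)).clm_comp
    (ContinuousLinearMap.toSpanSingleton 𝕜 (u i))

end lp

namespace ContinuousLinearMap

theorem exists_tendsto_subseq_of_forall_isCompactOperator [CompleteSpace E] [CompleteSpace F]
    (T : E →L[𝕜] F)
    (hT : ∀ S : lp (fun _ : ℕ => 𝕜) 1 →L[𝕜] E, IsCompactOperator (T ∘L S) → IsCompactOperator S)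
    {x : ℕ → E} (hx : BddAbove (Set.range fun n => ‖x n‖)) (hTx : Tendsto (T ∘ x) atTop (𝓝 0)) :
    ∃ z, ∃ φ : ℕ → ℕ, StrictMono φ ∧ Tendsto (x ∘ φ) atTop (𝓝 z) := by
  let u : lp (fun _ : ℕ => E) ∞ := ⟨x, memℓp_infty hx⟩
  have hS : IsCompactOperator (lp.sumSMulL 𝕜 u) := hT _ <| by
    rw [lp.comp_sumSMulL]
    exact lp.isCompactOperator_sumSMulL _ (by rw [Nat.cofinite_eq_atTop]; exact hTx)
  obtain ⟨K, hK, hSK⟩ := hS.image_closedBall_subset_compact 1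
  obtain ⟨z, -, φ, hφ, hz⟩ := hK.tendsto_subseq fun n =>
    hSK ⟨lp.single 1 n 1, by simp [lp.norm_single], lp.sumSMulL_apply_single u n⟩
  exact ⟨z, φ, hφ, hz⟩

theorem exists_antilipschitzWith_of_tendsto_subseq (f : E →L[𝕜] F) (hf : Injective f)
    (h : ∀ x : ℕ → E, (∀ n, ‖x n‖ = 1) → Tendsto (f ∘ x) atTop (𝓝 0) →
      ∃ z, ∃ φ : ℕ → ℕ, StrictMono φ ∧ Tendsto (x ∘ φ) atTop (𝓝 z)) :
    ∃ K, AntilipschitzWith K f := by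
  by_contra! hK
  have hy (n : ℕ) : ∃ y, (n + 1) * ‖f y‖ < ‖y‖ := by
    by_contra! hn
    exact hK (n + 1) (f.antilipschitz_of_bound fun y => by exact_mod_cast hn y)
  choose y hy using hy
  have hy0 (n : ℕ) : y n ≠ 0 := fun h => by simpa [h] using hy n
  set x := fun n => (‖y n‖⁻¹ : 𝕜) • y n
  have hx (n : ℕ) : ‖x n‖ = 1 := norm_smul_inv_norm (hy0 n)
  have hfx (n : ℕ) : ‖f (x n)‖ ≤ 1 / (n + 1) := by
    have := norm_pos_iff.2 (hy0 n)
    simp only [x, map_smul, norm_smul, norm_inv, RCLike.norm_ofReal, abs_norm]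
    rw [inv_mul_le_iff₀ this, mul_one_div, le_div_iff₀ (by positivity)]
    linarith [hy n]
  have hfx0 : Tendsto (f ∘ x) atTop (𝓝 0) :=
    squeeze_zero_norm hfx tendsto_one_div_add_atTop_nhds_zero_nat
  obtain ⟨z, φ, hφ, hz⟩ := h x hx hfx0
  have hz1 : ‖z‖ = 1 := tendsto_nhds_unique hz.norm (by simp [hx])
  have hfz : f z = 0 :=
    tendsto_nhds_unique ((f.continuous.tendsto z).comp hz) (hfx0.comp hφ.tendsto_atTop)
  rw [hf (hfz.trans (map_zero f).symm), norm_zero] at hz1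
  exact zero_ne_one hz1

variable {T : E →L[𝕜] F} {N : Submodule 𝕜 E}

theorem apply_projectionL_of_isTopCompl_ker
    (hN : (LinearMap.ker (T : E →ₗ[𝕜] F)).IsTopCompl N) (x : E) :
    T (N.projectionL _ hN.symm x) = T x := by
  rw [Submodule.projectionL_eq_self_sub_projectionL, map_sub, sub_eq_self]
  exact Submodule.projectionL_apply_mem hN x

theorem range_comp_subtypeL_of_isTopCompl_ker
    (hN : (LinearMap.ker (T : E →ₗ[𝕜] F)).IsTopCompl N) :
    Set.range (T ∘L N.subtypeL) = Set.range T := by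
  rw [coe_comp]
  refine (Set.range_comp_subset_range _ _).antisymm ?_
  rintro _ ⟨x, rfl⟩
  exact ⟨N.projectionOntoL _ hN.symm x, apply_projectionL_of_isTopCompl_ker hN x⟩

theorem injective_comp_subtypeL_of_isCompl_ker
    (hN : IsCompl (LinearMap.ker (T : E →ₗ[𝕜] F)) N) : Injective (T ∘L N.subtypeL) :=
  (injective_iff_map_eq_zero _).2 fun x hx =>
    Subtype.ext (Submodule.disjoint_def.1 hN.disjoint x hx x.2)

theorem isClosedEmbedding_comp_subtypeL [CompleteSpace E] [CompleteSpace F]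
    (hN : (LinearMap.ker (T : E →ₗ[𝕜] F)).IsTopCompl N) (hT : IsClosed (Set.range T)) :
    IsClosedEmbedding (T ∘L N.subtypeL) := by
  have : CompleteSpace N := hN.symm.isClosed.completeSpace_coe
  obtain ⟨K, hK⟩ := (T ∘L N.subtypeL).antilipschitz_of_injective_of_isClosed_range
    (injective_comp_subtypeL_of_isCompl_ker hN.isCompl)
    (by rwa [range_comp_subtypeL_of_isTopCompl_ker hN])
  exact hK.isClosedEmbedding (T ∘L N.subtypeL).uniformContinuous

theorem isCompactOperator_of_isCompactOperator_comp [CompleteSpace E] [CompleteSpace F]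
    [FiniteDimensional 𝕜 (LinearMap.ker (T : E →ₗ[𝕜] F))] (hT : IsClosed (Set.range T))
    {H : Type*} [NormedAddCommGroup H] [NormedSpace 𝕜 H] {S : H →L[𝕜] E}
    (hTS : IsCompactOperator (T ∘L S)) : IsCompactOperator S := by
  set K := LinearMap.ker (T : E →ₗ[𝕜] F)
  obtain ⟨N, hN⟩ := (Submodule.ClosedComplemented.of_finiteDimensional K).exists_isTopCompl
  have hS : ⇑S = K.subtypeL ∘ (K.projectionOntoL N hN ∘L S) +
      N.subtypeL ∘ (N.projectionOntoL K hN.symm ∘L S) :=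
    funext fun x => (Submodule.projectionL_add_projectionL_eq_self hN (S x)).symm
  rw [hS]
  refine IsCompactOperator.add ?_ ?_
  · exact (isCompactOperator_of_locallyCompactSpace_dom _).clm_comp _
  · refine IsCompactOperator.clm_comp (.of_comp_isClosedEmbedding
      (isClosedEmbedding_comp_subtypeL hN hT) ?_) _
    have hTP : ⇑(T ∘L N.subtypeL) ∘ (N.projectionOntoL K hN.symm ∘L S) = T ∘L S :=
      funext fun x => apply_projectionL_of_isTopCompl_ker hN (S x)
    rwa [hTP]

theorem finiteDimensional_ker_of_forall_isCompactOperator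
    (hT : ∀ S : LinearMap.ker (T : E →ₗ[𝕜] F) →L[𝕜] E,
      IsCompactOperator (T ∘L S) → IsCompactOperator S) :
    FiniteDimensional 𝕜 (LinearMap.ker (T : E →ₗ[𝕜] F)) := by
  set K := LinearMap.ker (T : E →ₗ[𝕜] F)
  have hK : IsCompactOperator K.subtypeL := hT _ <| by
    convert isCompactOperator_zero
    ext x
    exact x.2
  exact .of_isCompactOperator_id
    (.of_comp_isClosedEmbedding (K.isClosedEmbedding_subtypeL T.isClosed_ker) hK)

theorem isClosed_range_of_forall_isCompactOperator [CompleteSpace E] [CompleteSpace F]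
    [FiniteDimensional 𝕜 (LinearMap.ker (T : E →ₗ[𝕜] F))]
    (hT : ∀ S : lp (fun _ : ℕ => 𝕜) 1 →L[𝕜] E,
      IsCompactOperator (T ∘L S) → IsCompactOperator S) :
    IsClosed (Set.range T) := by
  obtain ⟨N, hN⟩ := (Submodule.ClosedComplemented.of_finiteDimensional
    (LinearMap.ker (T : E →ₗ[𝕜] F))).exists_isTopCompl
  have hNc : IsClosed (N : Set E) := hN.symm.isClosed
  have : CompleteSpace N := hNc.completeSpace_coe
  obtain ⟨K, hK⟩ := (T ∘L N.subtypeL).exists_antilipschitzWith_of_tendsto_subseq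
    (injective_comp_subtypeL_of_isCompl_ker hN.isCompl) fun x hx hTx => by
      obtain ⟨z, φ, hφ, hz⟩ := T.exists_tendsto_subseq_of_forall_isCompactOperator hT
        (x := fun n => (x n : E)) ⟨1, by rintro _ ⟨n, rfl⟩; exact (hx n).le⟩ hTx
      have hzN : z ∈ N := hNc.mem_of_tendsto hz (.of_forall fun n => (x (φ n)).2)
      exact ⟨⟨z, hzN⟩, φ, hφ, tendsto_subtype_rng.2 hz⟩
  rw [← range_comp_subtypeL_of_isTopCompl_ker hN]
  exact hK.isClosed_range (T ∘L N.subtypeL).uniformContinuous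

end ContinuousLinearMap

end

/-- A continuous linear operator `T` between real Banach spaces is upper semi-Fredholm
(finite-dimensional kernel and closed range) iff for every real Banach space `H` and every
continuous linear operator `S : H → E`, compactness of `T ∘ S` implies compactness of `S`. -/
theorem usf_iff_compact_factor
    {E : Type u} {F : Type v}
    [NormedAddCommGroup E] [NormedSpace ℝ E] [CompleteSpace E]
    [NormedAddCommGroup F] [NormedSpace ℝ F] [CompleteSpace F]
    (T : E →L[ℝ] F) :
    (FiniteDimensional ℝ (LinearMap.ker (T : E →ₗ[ℝ] F)) ∧ IsClosed (LinearMap.range (T : E →ₗ[ℝ] F) : Set F)) ↔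
      ∀ (H : Type u) [NormedAddCommGroup H] [NormedSpace ℝ H] [CompleteSpace H],
        ∀ S : H →L[ℝ] E, IsCompactOperator (T.comp S) → IsCompactOperator S := by
  rw [LinearMap.coe_range, ContinuousLinearMap.coe_coe]
  constructor
  · rintro ⟨hker, hrange⟩ H _ _ _ S
    exact T.isCompactOperator_of_isCompactOperator_comp hrange
  · intro hT
    have : CompleteSpace (LinearMap.ker (T : E →ₗ[ℝ] F)) := T.isClosed_ker.completeSpace_coe
    have := T.finiteDimensional_ker_of_forall_isCompactOperator (hT _)
    refine ⟨inferInstance, T.isClosed_range_of_forall_isCompactOperator fun S hTS => ?_⟩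
    -- `H` must live in `Type u`, so the test space `ℓ¹` is lifted to that universe.
    let e : ULift.{u} (lp (fun _ : ℕ => ℝ) 1) ≃L[ℝ] lp (fun _ : ℕ => ℝ) 1 :=
      ContinuousLinearEquiv.ulift
    have hSe : IsCompactOperator (S ∘L e.toContinuousLinearMap) :=
      hT _ _ (by exact hTS.comp_clm e.toContinuousLinearMap)
    have hS : ⇑(S ∘L e.toContinuousLinearMap) ∘ e.symm = S := funext fun x => by simp
    exact hS ▸ hSe.comp_clm e.symm.toContinuousLinearMap
end

section
/- Let E and F be real Banach spaces and let T : E → F be a continuous linear operator. Then T is upper semi-Fredholm (its kernel is finite-dimensional and its range is closed) if and only if T is complementary to the weak topology on E; that is, if and only if there exist δ > 0 and a weakly open neighborhood U of 0 in E such that no e ∈ E satisfies simultaneously ‖e‖ = 1, e ∈ U, and ‖Te‖ ≤ δ. -/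
open Topology

/-- The weak topology on a real normed space `E`: the coarsest topology making every
norm-continuous linear functional on `E` continuous. (In Mathlib's order on topologies,
where smaller means finer, this is the infimum of the topologies induced by the
functionals.) -/
def weakTopology (E : Type*) [NormedAddCommGroup E] [NormedSpace ℝ E] :
    TopologicalSpace E :=
  ⨅ f : E →L[ℝ] ℝ, TopologicalSpace.induced f inferInstance

/-!
If `T` is upper semi-Fredholm, choose a continuous projection `P` onto the finite-dimensional
kernel. By the open mapping theorem `‖e - P e‖ ≤ C ‖T e‖`, and `P` is weakly continuous because
its target is finite-dimensional; so on the weak neighbourhood `‖P e‖ < 1/2` of `0` every unit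
vector has `‖T e‖ ≥ 1/(2C)`.

Conversely, a weak neighbourhood of `0` contains a closed subspace `V` of finite codimension, and
complementarity says exactly that `T` is bounded below on `V`. Then `ker T` meets `V` trivially,
hence is finite-dimensional, and `T(V)` is closed, hence so is `range T = T(V) + (finite-dim)`.
-/

section WeakTopology

variable {E : Type*} [NormedAddCommGroup E] [NormedSpace ℝ E]

theorem continuous_weakTopology_dual (f : E →L[ℝ] ℝ) : Continuous[weakTopology E, _] f :=
  continuous_iInf_dom continuous_induced_dom

theorem continuous_of_forall_dual_comp {X G : Type*} [TopologicalSpace X] [NormedAddCommGroup G]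
    [NormedSpace ℝ G] [FiniteDimensional ℝ G] {g : X → G}
    (h : ∀ φ : G →L[ℝ] ℝ, Continuous (φ ∘ g)) : Continuous g := by
  let b := Module.finBasis ℝ G
  have hg : g = fun x => ∑ i, b.coord i (g x) • b i :=
    funext fun x => (b.sum_repr (g x)).symm
  rw [hg]
  exact continuous_finsetSum _ fun i _ =>
    (h (LinearMap.toContinuousLinearMap (b.coord i))).smul continuous_const

theorem continuous_weakTopology_of_finiteDimensional {G : Type*} [NormedAddCommGroup G]
    [NormedSpace ℝ G] [FiniteDimensional ℝ G] (P : E →L[ℝ] G) :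
    Continuous[weakTopology E, _] P :=
  @continuous_of_forall_dual_comp E G (weakTopology E) _ _ _ _ fun φ =>
    continuous_weakTopology_dual (φ.comp P)

theorem exists_cofg_subset_of_isOpen_weak {U : Set E} (hU : IsOpen[weakTopology E] U)
    (hU0 : (0 : E) ∈ U) :
    ∃ V : Submodule ℝ E, IsClosed (V : Set E) ∧ V.CoFG ∧ (V : Set E) ⊆ U := by
  have hnhds : U ∈ @nhds E (weakTopology E) 0 := @IsOpen.mem_nhds E (weakTopology E) _ _ hU hU0
  rw [weakTopology, nhds_iInf] at hnhds
  simp only [nhds_induced, map_zero] at hnhds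
  obtain ⟨I, hI, W, hW, rfl⟩ := Filter.mem_iInf.1 hnhds
  have := hI.to_subtype
  let Φ : E →L[ℝ] (I → ℝ) := ContinuousLinearMap.pi fun f => f
  refine ⟨LinearMap.ker (Φ : E →ₗ[ℝ] (I → ℝ)), Φ.isClosed_ker, Submodule.CoFG.ker _,
    fun x hx => Set.mem_iInter.2 fun f => ?_⟩
  obtain ⟨N, hN, hNW⟩ := Filter.mem_comap.1 (hW f)
  have hfx : (f : E →L[ℝ] ℝ) x = 0 := congrFun (LinearMap.mem_ker.1 hx) f
  exact hNW (show (f : E →L[ℝ] ℝ) x ∈ N from hfx ▸ mem_of_mem_nhds hN)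

end WeakTopology

namespace ContinuousLinearMap

variable {E F : Type*} [NormedAddCommGroup E] [NormedSpace ℝ E]
  [NormedAddCommGroup F] [NormedSpace ℝ F]

theorem mul_norm_le_of_forall_norm_eq_one (T : E →L[ℝ] F) (V : Submodule ℝ E) {δ : ℝ}
    (h : ∀ e ∈ V, ‖e‖ = 1 → δ ≤ ‖T e‖) : ∀ x ∈ V, δ * ‖x‖ ≤ ‖T x‖ := by
  intro x hx
  rcases eq_or_ne x 0 with rfl | hx0
  · simp
  have hpos : 0 < ‖x‖ := norm_pos_iff.2 hx0
  have hunit := h (‖x‖⁻¹ • x) (V.smul_mem _ hx) (by rw [norm_smul, norm_inv, norm_norm,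
    inv_mul_cancel₀ hpos.ne'])
  rw [map_smul, norm_smul, norm_inv, norm_norm] at hunit
  calc δ * ‖x‖ ≤ ‖x‖⁻¹ * ‖T x‖ * ‖x‖ := by gcongr
    _ = ‖T x‖ := by field_simp

theorem finiteDimensional_ker_of_mul_norm_le (T : E →L[ℝ] F) {V : Submodule ℝ E} (hV : V.CoFG)
    {δ : ℝ} (hδ : 0 < δ) (h : ∀ x ∈ V, δ * ‖x‖ ≤ ‖T x‖) :
    FiniteDimensional ℝ (LinearMap.ker (T : E →ₗ[ℝ] F)) := by
  have hdisj : Disjoint (LinearMap.ker (T : E →ₗ[ℝ] F)) V := by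
    rw [Submodule.disjoint_def]
    intro x hxT hxV
    have hTx : T x = 0 := hxT
    have : δ * ‖x‖ ≤ 0 := by simpa [hTx] using h x hxV
    exact norm_le_zero_iff.1 (nonpos_of_mul_nonpos_right this hδ)
  exact Module.Finite.iff_fg.2 (hV.fg_of_disjoint hdisj)

theorem isClosed_map_of_mul_norm_le [CompleteSpace E] (T : E →L[ℝ] F) {V : Submodule ℝ E}
    (hV : IsClosed (V : Set E)) {δ : ℝ} (hδ : 0 < δ) (h : ∀ x ∈ V, δ * ‖x‖ ≤ ‖T x‖) :
    IsClosed (V.map (T : E →ₗ[ℝ] F) : Set F) := by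
  have := hV.completeSpace_coe
  let S : V →L[ℝ] F := T.comp V.subtypeL
  have hS : ∀ v : V, ‖v‖ ≤ (⟨δ⁻¹, by positivity⟩ : NNReal) * ‖S v‖ := fun v => by
    show ‖v‖ ≤ δ⁻¹ * ‖T v‖
    rw [le_inv_mul_iff₀ hδ]
    exact h v v.2
  have hrange : (V.map (T : E →ₗ[ℝ] F) : Set F) = Set.range S := by
    ext y
    simp [S]
  rw [hrange]
  exact (S.antilipschitz_of_bound hS).isClosed_range S.uniformContinuous

theorem isClosed_range_of_mul_norm_le [CompleteSpace E] (T : E →L[ℝ] F) {V : Submodule ℝ E}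
    (hV : IsClosed (V : Set E)) (hVf : V.CoFG) {δ : ℝ} (hδ : 0 < δ)
    (h : ∀ x ∈ V, δ * ‖x‖ ≤ ‖T x‖) :
    IsClosed (LinearMap.range (T : E →ₗ[ℝ] F) : Set F) :=
  LinearMap.isClosed_range_of_isClosed_map_of_finiteDimensional_quotient
    (T.isClosed_map_of_mul_norm_le hV hδ h)

theorem exists_norm_le_mul_norm_of_ker_le [CompleteSpace E] [CompleteSpace F] {G : Type*}
    [NormedAddCommGroup G] [NormedSpace ℝ G] (T : E →L[ℝ] F)
    (hT : IsClosed (LinearMap.range (T : E →ₗ[ℝ] F) : Set F)) (Q : E →L[ℝ] G)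
    (hQ : LinearMap.ker (T : E →ₗ[ℝ] F) ≤ LinearMap.ker (Q : E →ₗ[ℝ] G)) :
    ∃ C > 0, ∀ x, ‖Q x‖ ≤ C * ‖T x‖ := by
  have : CompleteSpace (LinearMap.range (T : E →ₗ[ℝ] F)) := hT.completeSpace_coe
  obtain ⟨C, hC, hpre⟩ := T.rangeRestrict.exists_preimage_norm_le
    (LinearMap.surjective_rangeRestrict _)
  refine ⟨(‖Q‖ + 1) * C, by positivity, fun x => ?_⟩
  obtain ⟨x', hTx', hx'⟩ := hpre (T.rangeRestrict x)
  have hQx : Q x = Q x' := by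
    have : x - x' ∈ LinearMap.ker (T : E →ₗ[ℝ] F) := by
      simpa [sub_eq_zero] using congrArg Subtype.val hTx'.symm
    simpa [sub_eq_zero] using hQ this
  calc ‖Q x‖ = ‖Q x'‖ := by rw [hQx]
    _ ≤ ‖Q‖ * (C * ‖T x‖) := Q.le_opNorm_of_le hx'
    _ ≤ (‖Q‖ + 1) * C * ‖T x‖ := by nlinarith [norm_nonneg Q, norm_nonneg (T x)]

end ContinuousLinearMap

/-- A continuous linear operator `T` between real Banach spaces is upper semi-Fredholm
(finite-dimensional kernel and closed range) iff `T` is complementary to the weak topology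
on `E`: there are `δ > 0` and a weakly open neighborhood `U` of `0` such that no `e` with
`‖e‖ = 1` lies in `U` and satisfies `‖T e‖ ≤ δ`. -/
theorem usf_iff_complements_weak_topology
    {E F : Type*} [NormedAddCommGroup E] [NormedSpace ℝ E] [CompleteSpace E]
    [NormedAddCommGroup F] [NormedSpace ℝ F] [CompleteSpace F]
    (T : E →L[ℝ] F) :
    (FiniteDimensional ℝ (LinearMap.ker (T : E →ₗ[ℝ] F)) ∧ IsClosed (LinearMap.range (T : E →ₗ[ℝ] F) : Set F)) ↔
      ∃ δ > 0, ∃ U : Set E, IsOpen[weakTopology E] U ∧ (0 : E) ∈ U ∧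
        ∀ e : E, ¬ (‖e‖ = 1 ∧ e ∈ U ∧ ‖T e‖ ≤ δ) := by
  constructor
  · rintro ⟨hK, hR⟩
    set K := LinearMap.ker (T : E →ₗ[ℝ] F)
    obtain ⟨P, hP⟩ := Submodule.ClosedComplemented.of_finiteDimensional K
    obtain ⟨C, hC, hdom⟩ := T.exists_norm_le_mul_norm_of_ker_le hR
      (ContinuousLinearMap.id ℝ E - K.subtypeL.comp P) fun k hk => by
        simpa [sub_eq_zero] using congrArg Subtype.val (hP ⟨k, hk⟩).symm
    simp only [sub_apply, ContinuousLinearMap.id_apply,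
      ContinuousLinearMap.comp_apply, Submodule.subtypeL_apply] at hdom
    refine ⟨(2 * C)⁻¹, by positivity, P ⁻¹' Metric.ball 0 2⁻¹,
      @Continuous.isOpen_preimage _ _ (weakTopology E) _ _
        (continuous_weakTopology_of_finiteDimensional P) _ Metric.isOpen_ball,
      by simp, ?_⟩
    rintro e ⟨he, hPe, hTe⟩
    have hfar : 2⁻¹ < ‖e - P e‖ := by
      rw [Set.mem_preimage, mem_ball_zero_iff, Submodule.coe_norm] at hPe
      linarith [norm_sub_norm_le e (P e : E)]
    have hsmall : C * ‖T e‖ ≤ 2⁻¹ := by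
      calc C * ‖T e‖ ≤ C * (2 * C)⁻¹ := by gcongr
        _ = 2⁻¹ := by field_simp
    linarith [hdom e]
  · rintro ⟨δ, hδ, U, hU, hU0, hTU⟩
    obtain ⟨V, hVc, hVf, hVU⟩ := exists_cofg_subset_of_isOpen_weak hU hU0
    have hbelow := T.mul_norm_le_of_forall_norm_eq_one V fun e he he1 =>
      (not_le.1 fun hle => hTU e ⟨he1, hVU he, hle⟩).le
    exact ⟨T.finiteDimensional_ker_of_mul_norm_le hVf hδ hbelow,
      T.isClosed_range_of_mul_norm_le hVc hVf hδ hbelow⟩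
end

section
/- Let F be a Banach lattice and let G ⊆ H be closed subspaces of F such that G has finite codimension in H (i.e., the quotient H/G is finite-dimensional). If G is dispersed, then H is dispersed; likewise, if G is anti-dispersed, then H is anti-dispersed. -/
/-!
Let `e` be almost disjoint in `H`, close to a disjoint `f`. The images of `e n` in the
finite-dimensional space `H ⧸ G` are bounded, so along two interlaced subsequences `a`, `b` the
differences `e (a n) - e (b n)` come close to vectors `g n ∈ G`. They are also close to the disjoint
vectors `f (a n) - f (b n)`, whose norms are at least `‖f (a n)‖ → 1` because `f (a n)` and
`f (b n)` are disjoint. Normalising the `g n` gives an almost disjoint sequence in `G`.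

For anti-dispersion, if `K ≤ H` is closed and infinite-dimensional then so is `K ⊓ G`, because
`K ⧸ (K ⊓ G)` embeds into `H ⧸ G`; an almost disjoint sequence of `K ⊓ G` lies in `K`.
-/

open Filter

/-- A sequence in a Banach lattice is disjoint if its terms are pairwise disjoint. -/
def IsDisjointSeq {F : Type*} [NormedAddCommGroup F] [Lattice F] [IsOrderedAddMonoid F] [HasSolidNorm F] (f : ℕ → F) : Prop :=
  ∀ m n, m ≠ n → |f m| ⊓ |f n| = 0

/-- A sequence `e` of norm-one vectors of a set `H` in a Banach lattice is almost disjoint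
if there is a disjoint sequence `f` with `‖f n − e n‖ → 0`. -/
def IsAlmostDisjointSeq {F : Type*} [NormedAddCommGroup F] [Lattice F] [IsOrderedAddMonoid F] [HasSolidNorm F]
    (H : Set F) (e : ℕ → F) : Prop :=
  (∀ n, e n ∈ H) ∧ (∀ n, ‖e n‖ = 1) ∧
    ∃ f : ℕ → F, IsDisjointSeq f ∧ Tendsto (fun n => ‖f n - e n‖) atTop (nhds 0)

/-- A closed subspace of a Banach lattice is dispersed if it contains no almost disjoint
sequence. -/
def IsDispersed {F : Type*} [NormedAddCommGroup F] [Lattice F] [IsOrderedAddMonoid F] [HasSolidNorm F] [NormedSpace ℝ F]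
    (H : Submodule ℝ F) : Prop :=
  ¬ ∃ e : ℕ → F, IsAlmostDisjointSeq (H : Set F) e

/-- A closed subspace of a Banach lattice is anti-dispersed if every infinite-dimensional
closed subspace of it contains an almost disjoint sequence. -/
def IsAntiDispersed {F : Type*} [NormedAddCommGroup F] [Lattice F] [IsOrderedAddMonoid F] [HasSolidNorm F] [NormedSpace ℝ F]
    (H : Submodule ℝ F) : Prop :=
  ∀ K : Submodule ℝ F, K ≤ H → IsClosed (K : Set F) → ¬ FiniteDimensional ℝ K →
    ∃ e : ℕ → F, IsAlmostDisjointSeq (K : Set F) e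


open Topology

section LatticeOrderedGroup

variable {α : Type*} [AddCommGroup α] [Lattice α] [IsOrderedAddMonoid α]

lemma inf_add_le_inf_add_inf {a b c : α} (ha : 0 ≤ a) (hb : 0 ≤ b) (hc : 0 ≤ c) :
    a ⊓ (b + c) ≤ a ⊓ b + a ⊓ c := by
  rw [inf_add, add_inf, add_inf]
  exact le_inf (le_inf (inf_le_left.trans (le_add_of_nonneg_left ha))
    (inf_le_left.trans (le_add_of_nonneg_right hc)))
    (le_inf (inf_le_left.trans (le_add_of_nonneg_left hb)) inf_le_right)

lemma abs_le_abs_sub_of_abs_inf_abs_eq_zero {x y : α} (h : |x| ⊓ |y| = 0) : |x| ≤ |x - y| :=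
  calc |x| = |x| ⊓ (|x - y| + |y|) := by
        refine (inf_eq_left.2 ?_).symm
        simpa using abs_add_le (x - y) y
    _ ≤ |x| ⊓ |x - y| + |x| ⊓ |y| :=
        inf_add_le_inf_add_inf (abs_nonneg _) (abs_nonneg _) (abs_nonneg _)
    _ ≤ |x - y| := by rw [h, add_zero]; exact inf_le_right

lemma abs_sub_inf_abs_sub_eq_zero {a b c d : α} (hac : |a| ⊓ |c| = 0) (had : |a| ⊓ |d| = 0)
    (hbc : |b| ⊓ |c| = 0) (hbd : |b| ⊓ |d| = 0) : |a - b| ⊓ |c - d| = 0 := by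
  have hsplit : ∀ {u v w : α}, 0 ≤ u → 0 ≤ v → 0 ≤ w → (u + v) ⊓ w ≤ u ⊓ w + v ⊓ w :=
    fun {u v w} hu hv hw => by simpa only [inf_comm _ w] using inf_add_le_inf_add_inf hw hu hv
  have habs : ∀ u v : α, |u - v| ≤ |u| + |v| := fun u v => by
    simpa [sub_eq_add_neg] using abs_add_le u (-v)
  refine le_antisymm ?_ (le_inf (abs_nonneg _) (abs_nonneg _))
  calc |a - b| ⊓ |c - d| ≤ (|a| + |b|) ⊓ (|c| + |d|) := inf_le_inf (habs a b) (habs c d)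
    _ ≤ |a| ⊓ (|c| + |d|) + |b| ⊓ (|c| + |d|) :=
        hsplit (abs_nonneg _) (abs_nonneg _) (add_nonneg (abs_nonneg _) (abs_nonneg _))
    _ ≤ (|a| ⊓ |c| + |a| ⊓ |d|) + (|b| ⊓ |c| + |b| ⊓ |d|) :=
        add_le_add (inf_add_le_inf_add_inf (abs_nonneg _) (abs_nonneg _) (abs_nonneg _))
          (inf_add_le_inf_add_inf (abs_nonneg _) (abs_nonneg _) (abs_nonneg _))
    _ = 0 := by rw [hac, had, hbc, hbd]; simp

lemma inv_two_pow_smul_nonneg [Module ℝ α] {x : α} (hx : 0 ≤ x) (k : ℕ) :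
    0 ≤ ((2 : ℝ) ^ k)⁻¹ • x := by
  induction k with
  | zero => simpa using hx
  | succ k ih =>
    refine nsmul_two_semiclosed ?_
    convert ih using 1
    rw [two_nsmul, ← add_smul, pow_succ]
    congr 1
    field_simp
    norm_num

end LatticeOrderedGroup

section SolidNorm

variable {F : Type*} [NormedAddCommGroup F] [Lattice F] [IsOrderedAddMonoid F] [HasSolidNorm F]
  [NormedSpace ℝ F]

/-- The positive cone is closed, so positivity passes from dyadic multiples to all `c ≥ 0`. -/
instance HasSolidNorm.posSMulMono : PosSMulMono ℝ F := by
  refine .of_smul_nonneg fun c hc x hx => ?_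
  have hdyadic : ∀ k : ℕ, 0 ≤ ((⌊c * 2 ^ k⌋₊ : ℝ) / 2 ^ k) • x := fun k => by
    rw [div_eq_mul_inv, mul_smul, Nat.cast_smul_eq_nsmul]
    exact nsmul_nonneg (inv_two_pow_smul_nonneg hx k) _
  have hlim : Tendsto (fun k : ℕ => (⌊c * 2 ^ k⌋₊ : ℝ) / 2 ^ k) atTop (𝓝 c) :=
    (tendsto_nat_floor_mul_div_atTop hc).comp (tendsto_pow_atTop_atTop_of_one_lt one_lt_two)
  exact (isClosed_nonneg.preimage (continuous_id.smul continuous_const)).mem_of_tendsto hlim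
    (.of_forall hdyadic)

lemma abs_smul_le_smul_abs {c : ℝ} (hc : 0 ≤ c) (x : F) : |c • x| ≤ c • |x| :=
  abs_le'.2 ⟨smul_le_smul_of_nonneg_left (le_abs_self x) hc,
    by rw [← smul_neg]; exact smul_le_smul_of_nonneg_left (neg_le_abs x) hc⟩

lemma abs_smul_inf_abs_eq_zero {c : ℝ} (hc : 0 ≤ c) {x y : F} (h : |x| ⊓ |y| = 0) :
    |c • x| ⊓ |y| = 0 := by
  have hM : (0 : ℝ) < max c 1 := lt_max_of_lt_right one_pos
  refine le_antisymm ?_ (le_inf (abs_nonneg _) (abs_nonneg _))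
  calc |c • x| ⊓ |y| ≤ (max c 1 • |x|) ⊓ (max c 1 • |y|) :=
        inf_le_inf ((abs_smul_le_smul_abs hc x).trans
            (smul_le_smul_of_nonneg_right (le_max_left c 1) (abs_nonneg x)))
          (le_smul_of_one_le_left (abs_nonneg y) (le_max_right c 1))
    _ = max c 1 • (|x| ⊓ |y|) := ((OrderIso.smulRight hM).map_inf _ _).symm
    _ = 0 := by rw [h, smul_zero]

end SolidNorm

section DisjointSeq

variable {F : Type*} [NormedAddCommGroup F] [Lattice F] [IsOrderedAddMonoid F] [HasSolidNorm F]
  {f : ℕ → F}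

lemma IsDisjointSeq.comp (hf : IsDisjointSeq f) {φ : ℕ → ℕ} (hφ : φ.Injective) :
    IsDisjointSeq (f ∘ φ) :=
  fun _ _ hmn => hf _ _ (hφ.ne hmn)

lemma IsDisjointSeq.sub_comp (hf : IsDisjointSeq f) {a b : ℕ → ℕ} (ha : a.Injective)
    (hb : b.Injective) (hab : ∀ m n, a m ≠ b n) : IsDisjointSeq (fun n => f (a n) - f (b n)) :=
  fun m n hmn => abs_sub_inf_abs_sub_eq_zero (hf _ _ (ha.ne hmn)) (hf _ _ (hab m n))
    (hf _ _ (hab n m).symm) (hf _ _ (hb.ne hmn))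

lemma IsDisjointSeq.smul [NormedSpace ℝ F] (hf : IsDisjointSeq f) {c : ℕ → ℝ}
    (hc : ∀ n, 0 ≤ c n) : IsDisjointSeq (fun n => c n • f n) := fun m n hmn => by
  have h := abs_smul_inf_abs_eq_zero (hc m) (hf m n hmn)
  rw [inf_comm] at h ⊢
  exact abs_smul_inf_abs_eq_zero (hc n) h

end DisjointSeq

lemma exists_strictMono_tendsto_sub_of_norm_le {X : Type*} [NormedAddCommGroup X]
    [ProperSpace X] {u : ℕ → X} {C : ℝ} (hu : ∀ n, ‖u n‖ ≤ C) :
    ∃ a b : ℕ → ℕ, StrictMono a ∧ StrictMono b ∧ (∀ m n, a m ≠ b n) ∧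
      Tendsto (fun n => u (a n) - u (b n)) atTop (𝓝 0) := by
  obtain ⟨v, -, φ, hφ, hv⟩ := tendsto_subseq_of_bounded
    (Metric.isBounded_closedBall (x := 0) (r := C)) fun n => mem_closedBall_zero_iff.2 (hu n)
  have heven : StrictMono fun n => 2 * n := fun _ _ h => by dsimp only; omega
  have hodd : StrictMono fun n => 2 * n + 1 := fun _ _ h => by dsimp only; omega
  refine ⟨fun n => φ (2 * n), fun n => φ (2 * n + 1), hφ.comp heven, hφ.comp hodd,
    fun m n h => by have := hφ.injective h; omega, ?_⟩
  simpa using (hv.comp heven.tendsto_atTop).sub (hv.comp hodd.tendsto_atTop)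

lemma Submodule.exists_mem_tendsto_norm_sub {R E : Type*} [Ring R] [SeminormedAddCommGroup E]
    [Module R E] (S : Submodule R E) {x : ℕ → E}
    (hx : Tendsto (fun n => S.mkQ (x n)) atTop (𝓝 0)) :
    ∃ g : ℕ → E, (∀ n, g n ∈ S) ∧ Tendsto (fun n => ‖x n - g n‖) atTop (𝓝 0) := by
  choose y hy hy_lt using fun n : ℕ =>
    Quotient.norm_mk_lt (S.mkQ (x n)) (Nat.one_div_pos_of_nat (n := n))
  refine ⟨fun n => x n - y n, fun n => ?_, ?_⟩
  · rw [← Quotient.mk_eq_zero, Quotient.mk_sub, hy, mkQ_apply, sub_self]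
  · simp only [sub_sub_cancel]
    refine squeeze_zero (fun _ => norm_nonneg _) (fun n => (hy_lt n).le) ?_
    simpa using hx.norm.add tendsto_one_div_add_atTop_nhds_zero_nat

lemma Submodule.exists_strictMono_tendsto_norm_sub_sub {E : Type*} [NormedAddCommGroup E]
    [NormedSpace ℝ E] (S : Submodule ℝ E) [IsClosed (S : Set E)] [FiniteDimensional ℝ (E ⧸ S)]
    {x : ℕ → E} {C : ℝ} (hx : ∀ n, ‖x n‖ ≤ C) :
    ∃ a b : ℕ → ℕ, StrictMono a ∧ StrictMono b ∧ (∀ m n, a m ≠ b n) ∧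
      ∃ g : ℕ → E, (∀ n, g n ∈ S) ∧
        Tendsto (fun n => ‖x (a n) - x (b n) - g n‖) atTop (𝓝 0) := by
  obtain ⟨a, b, ha, hb, hab, hlim⟩ := exists_strictMono_tendsto_sub_of_norm_le
    (u := fun n => S.mkQ (x n)) fun n => (Quotient.norm_mk_le S (x n)).trans (hx n)
  exact ⟨a, b, ha, hb, hab, S.exists_mem_tendsto_norm_sub (by simpa using hlim)⟩

section AlmostDisjoint

variable {F : Type*} [NormedAddCommGroup F] [Lattice F] [IsOrderedAddMonoid F] [HasSolidNorm F]
  [NormedSpace ℝ F]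

lemma exists_isAlmostDisjointSeq_of_le_norm (G : Submodule ℝ F) {g w : ℕ → F}
    (hg : ∀ n, g n ∈ G) (hw : IsDisjointSeq w)
    (hwg : Tendsto (fun n => ‖w n - g n‖) atTop (𝓝 0)) {δ : ℝ} (hδ : 0 < δ)
    (hgδ : ∀ n, δ ≤ ‖g n‖) : ∃ e, IsAlmostDisjointSeq (G : Set F) e := by
  have hg0 : ∀ n, 0 < ‖g n‖ := fun n => hδ.trans_le (hgδ n)
  refine ⟨fun n => ‖g n‖⁻¹ • g n, fun n => G.smul_mem _ (hg n),
    fun n => norm_smul_inv_norm (norm_pos_iff.1 (hg0 n)),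
    fun n => ‖g n‖⁻¹ • w n, hw.smul fun n => (inv_pos.2 (hg0 n)).le, ?_⟩
  refine squeeze_zero (fun _ => norm_nonneg _) (fun n => ?_) (by simpa using hwg.const_mul δ⁻¹)
  rw [← smul_sub, norm_smul, norm_inv, norm_norm]
  exact mul_le_mul_of_nonneg_right ((inv_le_inv₀ (hg0 n) hδ).2 (hgδ n)) (norm_nonneg _)

lemma exists_isAlmostDisjointSeq_of_tendsto (G : Submodule ℝ F) {g w : ℕ → F}
    (hg : ∀ n, g n ∈ G) (hw : IsDisjointSeq w)
    (hwg : Tendsto (fun n => ‖w n - g n‖) atTop (𝓝 0)) {δ : ℝ} (hδ : 0 < δ)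
    (hwδ : ∀ᶠ n in atTop, δ ≤ ‖w n‖) : ∃ e, IsAlmostDisjointSeq (G : Set F) e := by
  have hgδ : ∀ᶠ n in atTop, δ / 2 ≤ ‖g n‖ := by
    filter_upwards [hwδ, hwg.eventually (gt_mem_nhds (half_pos hδ))] with n hwn hwgn
    linarith [norm_sub_norm_le (w n) (g n)]
  obtain ⟨N, hN⟩ := eventually_atTop.1 hgδ
  exact exists_isAlmostDisjointSeq_of_le_norm G (fun n => hg (n + N))
    (hw.comp (add_left_injective N)) (hwg.comp (tendsto_add_atTop_nat N)) (half_pos hδ)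
    fun n => hN (n + N) (Nat.le_add_left N n)

end AlmostDisjoint

lemma Submodule.finiteDimensional_of_le_of_finiteDimensional_inf {k M : Type*} [Field k]
    [AddCommGroup M] [Module k M] {G H K : Submodule k M} (hKH : K ≤ H)
    [FiniteDimensional k (H ⧸ G.comap H.subtype)] [FiniteDimensional k ↥(K ⊓ G)] :
    FiniteDimensional k K := by
  have : FiniteDimensional k ((K ⊓ G).comap K.subtype) :=
    (comapSubtypeEquivOfLe inf_le_left).symm.finiteDimensional
  have hle : (K ⊓ G).comap K.subtype ≤ (G.comap H.subtype).comap (inclusion hKH) :=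
    fun x hx => (mem_inf.1 hx).2
  have hinj : Function.Injective (mapQ _ _ (inclusion hKH) hle) := by
    rw [← LinearMap.ker_eq_bot, eq_bot_iff]
    intro x hx
    induction x using Quotient.induction_on
    simp only [LinearMap.mem_ker, mapQ_apply, Quotient.mk_eq_zero, mem_bot] at hx ⊢
    simpa using hx
  have := Module.Finite.of_injective _ hinj
  exact Module.Finite.of_submodule_quotient ((K ⊓ G).comap K.subtype)

section FiniteCodimension

variable {F : Type*} [NormedAddCommGroup F] [Lattice F] [IsOrderedAddMonoid F] [HasSolidNorm F]
  [NormedSpace ℝ F]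

lemma IsAlmostDisjointSeq.exists_of_finiteDimensional_quotient {G H : Submodule ℝ F}
    (hG : IsClosed (G : Set F)) [FiniteDimensional ℝ (H ⧸ G.comap H.subtype)] {e : ℕ → F}
    (he : IsAlmostDisjointSeq (H : Set F) e) : ∃ e', IsAlmostDisjointSeq (G : Set F) e' := by
  obtain ⟨heH, he1, f, hf, hfe⟩ := he
  have : IsClosed (G.comap H.subtype : Set H) := hG.preimage continuous_subtype_val
  obtain ⟨a, b, ha, hb, hab, g, hgG, hg⟩ :=
    (G.comap H.subtype).exists_strictMono_tendsto_norm_sub_sub (x := fun n => ⟨e n, heH n⟩)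
      (C := 1) fun n => (he1 n).le
  have hfea := hfe.comp ha.tendsto_atTop
  have hfeb := hfe.comp hb.tendsto_atTop
  refine exists_isAlmostDisjointSeq_of_tendsto G (w := fun n => f (a n) - f (b n))
    (g := fun n => g n) hgG (hf.sub_comp ha.injective hb.injective hab) ?_ one_half_pos ?_
  · refine squeeze_zero (fun _ => norm_nonneg _) (fun n => ?_)
      (by simpa using (hfea.add hfeb).add hg)
    calc ‖f (a n) - f (b n) - g n‖
        = ‖(f (a n) - e (a n)) - (f (b n) - e (b n)) + (e (a n) - e (b n) - g n)‖ := by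
          congr 1; abel
      _ ≤ ‖f (a n) - e (a n)‖ + ‖f (b n) - e (b n)‖ + ‖e (a n) - e (b n) - g n‖ :=
          (norm_add_le _ _).trans (by gcongr; exact norm_sub_le _ _)
  · filter_upwards [hfea.eventually (gt_mem_nhds one_half_pos)]
      with n (hn : ‖f (a n) - e (a n)‖ < 1 / 2)
    calc (1 : ℝ) / 2 ≤ ‖f (a n)‖ := by
          linarith [he1 (a n), norm_sub_norm_le (e (a n)) (f (a n)),
            norm_sub_rev (f (a n)) (e (a n))]
      _ ≤ ‖f (a n) - f (b n)‖ :=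
          norm_le_norm_of_abs_le_abs (abs_le_abs_sub_of_abs_inf_abs_eq_zero (hf _ _ (hab n n)))

end FiniteCodimension

theorem dispersed_of_finite_codim_general
    {F : Type*} [NormedAddCommGroup F] [Lattice F] [IsOrderedAddMonoid F] [HasSolidNorm F] [NormedSpace ℝ F]
    (G H : Submodule ℝ F)
    (hGclosed : IsClosed (G : Set F))
    (hcodim : FiniteDimensional ℝ (↥H ⧸ Submodule.comap H.subtype G)) :
    (IsDispersed G → IsDispersed H) ∧ (IsAntiDispersed G → IsAntiDispersed H) := by
  refine ⟨fun hG ⟨e, he⟩ => hG (he.exists_of_finiteDimensional_quotient hGclosed), ?_⟩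
  intro hG K hKH hKclosed hKinf
  have hKGinf : ¬ FiniteDimensional ℝ ↥(K ⊓ G) := fun _ =>
    hKinf (Submodule.finiteDimensional_of_le_of_finiteDimensional_inf (G := G) hKH)
  obtain ⟨e, heKG, he⟩ := hG (K ⊓ G) inf_le_right (hKclosed.inter hGclosed) hKGinf
  exact ⟨e, fun n => (heKG n).1, he⟩

/-- If `G ⊆ H` are closed subspaces of a Banach lattice `F` with `G` of finite codimension
in `H`, then: if `G` is dispersed so is `H`, and if `G` is anti-dispersed so is `H`. -/
theorem dispersed_of_finite_codim
    {F : Type*} [NormedAddCommGroup F] [Lattice F] [IsOrderedAddMonoid F] [HasSolidNorm F] [NormedSpace ℝ F] [CompleteSpace F]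
    (G H : Submodule ℝ F) (hGH : G ≤ H)
    (hGclosed : IsClosed (G : Set F)) (hHclosed : IsClosed (H : Set F))
    (hcodim : FiniteDimensional ℝ (↥H ⧸ Submodule.comap H.subtype G)) :
    (IsDispersed G → IsDispersed H) ∧ (IsAntiDispersed G → IsAntiDispersed H) :=
  dispersed_of_finite_codim_general G H hGclosed hcodim
end

section
/- Let E be a closed subspace of ℓ∞ (the Banach lattice of bounded real sequences with the supremum norm and coordinatewise order) which is not dispersed. Then for every ε > 0 there exists a continuous injective linear operator T from c₀ (the space of real sequences converging to 0, with the supremum norm) into E such that (1 − ε)‖x‖ ≤ ‖Tx‖ ≤ (1 + ε)‖x‖ for every x ∈ c₀; in particular E contains a subspace isomorphic to c₀ with isomorphism constant arbitrarily close to 1. -/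
open Filter ZeroAtInfty ENNReal

/-- `ℓ∞`: the Banach lattice of bounded real sequences with the supremum norm (the lattice
operations being coordinatewise). -/
noncomputable abbrev LinfSeq := lp (fun _ : ℕ => ℝ) ∞

/-- A sequence in `ℓ∞` is disjoint if its terms are pairwise disjoint, i.e. the pointwise
infima of their absolute values vanish. -/
def IsDisjointSeqLinf (f : ℕ → LinfSeq) : Prop :=
  ∀ m n, m ≠ n → ∀ k : ℕ, min |f m k| |f n k| = 0

/-!
Pass to a subsequence along which `∑ₖ ‖eₖ - fₖ‖ ≤ δ`. For `x ∈ c₀` the series `∑ₖ xₖ fₖ` of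
disjoint vectors converges, and its norm `supₖ |xₖ| ‖fₖ‖` lies within `δ‖x‖` of `‖x‖` because
`|‖fₖ‖ - 1| ≤ δ`; replacing `fₖ` by `eₖ` moves the sum by at most `δ‖x‖`. Hence
`T x = ∑ₖ xₖ eₖ`, which lies in `E` since `E` is closed, satisfies `|‖T x‖ - ‖x‖| ≤ 2δ‖x‖`.
-/

open Topology Function

lemma isDisjointSeqLinf_iff {h : ℕ → LinfSeq} :
    IsDisjointSeqLinf h ↔ ∀ m n, m ≠ n → ∀ j, h m j = 0 ∨ h n j = 0 := by
  refine forall₄_congr fun m n _ j => ?_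
  rcases le_total |h m j| |h n j| with hle | hle <;> simp [hle] <;> grind [abs_nonneg]

namespace IsDisjointSeqLinf

variable {g h : ℕ → LinfSeq}

lemma comp_injective (hg : IsDisjointSeqLinf g) {n : ℕ → ℕ} (hn : Injective n) :
    IsDisjointSeqLinf (g ∘ n) :=
  fun _ _ hmn => hg _ _ (hn.ne hmn)

lemma smul (hg : IsDisjointSeqLinf g) (a : ℕ → ℝ) : IsDisjointSeqLinf fun k => a k • g k :=
  isDisjointSeqLinf_iff.2 fun m n hmn j =>
    ((isDisjointSeqLinf_iff.1 hg) m n hmn j).imp (by simp [·]) (by simp [·])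

lemma apply_eq_zero (hh : IsDisjointSeqLinf h) {m n j : ℕ} (hmn : m ≠ n) (hn : h n j ≠ 0) :
    h m j = 0 :=
  ((isDisjointSeqLinf_iff.1 hh) m n hmn j).resolve_right hn

lemma sum_apply_of_ne_zero (hh : IsDisjointSeqLinf h) {s : Finset ℕ} {k j : ℕ} (hk : k ∈ s)
    (hkj : h k j ≠ 0) : (∑ i ∈ s, h i) j = h k j := by
  rw [lp.coeFn_sum, Finset.sum_apply]
  exact Finset.sum_eq_single_of_mem k hk fun i _ hik => hh.apply_eq_zero hik hkj

lemma norm_sum_le (hh : IsDisjointSeqLinf h) {s : Finset ℕ} {C : ℝ} (hC : 0 ≤ C)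
    (hs : ∀ i ∈ s, ‖h i‖ ≤ C) : ‖∑ i ∈ s, h i‖ ≤ C := by
  refine lp.norm_le_of_forall_le hC fun j => ?_
  by_cases hj : ∃ k ∈ s, h k j ≠ 0
  · obtain ⟨k, hk, hkj⟩ := hj
    rw [hh.sum_apply_of_ne_zero hk hkj]
    exact (lp.norm_apply_le_norm top_ne_zero _ j).trans (hs k hk)
  · push Not at hj
    rwa [lp.coeFn_sum, Finset.sum_apply, Finset.sum_eq_zero hj, norm_zero]

lemma norm_le_norm_sum (hh : IsDisjointSeqLinf h) {s : Finset ℕ} {k : ℕ} (hk : k ∈ s) :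
    ‖h k‖ ≤ ‖∑ i ∈ s, h i‖ := by
  refine lp.norm_le_of_forall_le (norm_nonneg _) fun j => ?_
  by_cases hkj : h k j = 0
  · simp [hkj]
  · rw [← hh.sum_apply_of_ne_zero hk hkj]
    exact lp.norm_apply_le_norm top_ne_zero _ j

lemma summable_of_tendsto_zero (hh : IsDisjointSeqLinf h) (h0 : Tendsto h atTop (𝓝 0)) :
    Summable h := by
  refine summable_iff_vanishing_norm.2 fun ε hε => ?_
  obtain ⟨N, hN⟩ := eventually_atTop.1 <|
    (tendsto_zero_iff_norm_tendsto_zero.1 h0).eventually (ge_mem_nhds (half_pos hε))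
  refine ⟨Finset.range N, fun t ht => ?_⟩
  refine (hh.norm_sum_le (half_pos hε).le fun i hi => hN i ?_).trans_lt (half_lt_self hε)
  simpa using Finset.disjoint_left.1 ht hi

lemma norm_tsum_le (hh : IsDisjointSeqLinf h) {C : ℝ} (hC : ∀ i, ‖h i‖ ≤ C) :
    ‖∑' i, h i‖ ≤ C := by
  have hC0 : 0 ≤ C := (norm_nonneg _).trans (hC 0)
  by_cases hs : Summable h
  · exact le_of_tendsto' hs.hasSum.norm fun s => hh.norm_sum_le hC0 fun i _ => hC i
  · simpa [tsum_eq_zero_of_not_summable hs] using hC0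

lemma norm_le_norm_tsum (hh : IsDisjointSeqLinf h) (hs : Summable h) (k : ℕ) :
    ‖h k‖ ≤ ‖∑' i, h i‖ :=
  ge_of_tendsto hs.hasSum.norm <| (eventually_ge_atTop {k}).mono fun _ hs =>
    hh.norm_le_norm_sum (Finset.singleton_subset_iff.1 hs)

end IsDisjointSeqLinf

namespace ZeroAtInftyContinuousMap

variable {α β : Type*} [TopologicalSpace α] [SeminormedAddCommGroup β]

lemma norm_le (f : C₀(α, β)) {C : ℝ} (hC : 0 ≤ C) : ‖f‖ ≤ C ↔ ∀ a, ‖f a‖ ≤ C :=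
  norm_toBCF_eq_norm (f := f) ▸ f.toBCF.norm_le hC

lemma norm_apply_le (f : C₀(α, β)) (a : α) : ‖f a‖ ≤ ‖f‖ :=
  norm_toBCF_eq_norm (f := f) ▸ f.toBCF.norm_coe_le_norm a

lemma tendsto_atTop_zero (f : C₀(ℕ, β)) : Tendsto f atTop (𝓝 0) := by
  simpa [cocompact_eq_cofinite, Nat.cofinite_eq_atTop] using zero_at_infty f

end ZeroAtInftyContinuousMap

section SeriesWithC0Coefficients

variable {X : Type*} [NormedAddCommGroup X] [NormedSpace ℝ X]

lemma norm_smul_le_norm_mul_norm (x : C₀(ℕ, ℝ)) (v : X) (k : ℕ) : ‖x k • v‖ ≤ ‖x‖ * ‖v‖ := by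
  rw [norm_smul]
  exact mul_le_mul_of_nonneg_right (x.norm_apply_le k) (norm_nonneg v)

lemma summable_smul_of_summable_norm [CompleteSpace X] {d : ℕ → X}
    (hd : Summable fun k => ‖d k‖) (x : C₀(ℕ, ℝ)) : Summable fun k => x k • d k :=
  (hd.mul_left ‖x‖).of_norm_bounded fun k => norm_smul_le_norm_mul_norm x (d k) k

lemma norm_tsum_smul_le_of_summable_norm {d : ℕ → X} (hd : Summable fun k => ‖d k‖)
    (x : C₀(ℕ, ℝ)) : ‖∑' k, x k • d k‖ ≤ ‖x‖ * ∑' k, ‖d k‖ :=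
  tsum_of_norm_bounded (hd.hasSum.mul_left ‖x‖) fun k => norm_smul_le_norm_mul_norm x (d k) k

noncomputable def c0SeriesMap (u : ℕ → X) (hu : ∀ x : C₀(ℕ, ℝ), Summable fun k => x k • u k) :
    C₀(ℕ, ℝ) →ₗ[ℝ] X where
  toFun x := ∑' k, x k • u k
  map_add' x y := by
    simp only [ZeroAtInftyContinuousMap.add_apply, add_smul, (hu x).tsum_add (hu y)]
  map_smul' c x := by
    simp only [ZeroAtInftyContinuousMap.smul_apply, smul_eq_mul, mul_smul,
      (hu x).tsum_const_smul c, RingHom.id_apply]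

end SeriesWithC0Coefficients

namespace IsDisjointSeqLinf

variable {g : ℕ → LinfSeq}

lemma summable_smul (hg : IsDisjointSeqLinf g) {C : ℝ} (hC : ∀ k, ‖g k‖ ≤ C) (x : C₀(ℕ, ℝ)) :
    Summable fun k => x k • g k :=
  (hg.smul x).summable_of_tendsto_zero <|
    NormedField.tendsto_zero_smul_of_tendsto_zero_of_bounded x.tendsto_atTop_zero
      (isBoundedUnder_of ⟨C, hC⟩)

lemma norm_tsum_smul_le (hg : IsDisjointSeqLinf g) {C : ℝ} (hC : ∀ k, ‖g k‖ ≤ C)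
    (x : C₀(ℕ, ℝ)) : ‖∑' k, x k • g k‖ ≤ C * ‖x‖ :=
  (hg.smul x).norm_tsum_le fun k => (norm_smul_le_norm_mul_norm x (g k) k).trans <| by
    rw [mul_comm]; exact mul_le_mul_of_nonneg_right (hC k) (norm_nonneg x)

lemma mul_norm_le_norm_tsum_smul (hg : IsDisjointSeqLinf g) {c : ℝ} (hc : ∀ k, c ≤ ‖g k‖)
    (x : C₀(ℕ, ℝ)) (hs : Summable fun k => x k • g k) : c * ‖x‖ ≤ ‖∑' k, x k • g k‖ := by
  rcases le_or_gt c 0 with hc0 | hc0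
  · exact (mul_nonpos_of_nonpos_of_nonneg hc0 (norm_nonneg x)).trans (norm_nonneg _)
  rw [← le_div_iff₀' hc0, x.norm_le (by positivity)]
  refine fun k => (le_div_iff₀' hc0).2 ?_
  calc c * ‖x k‖ ≤ ‖x k • g k‖ := by
        rw [norm_smul, mul_comm]; exact mul_le_mul_of_nonneg_left (hc k) (norm_nonneg _)
    _ ≤ ‖∑' k, x k • g k‖ := (hg.smul x).norm_le_norm_tsum hs k

end IsDisjointSeqLinf

lemma abs_norm_sub_one_le_of_tsum_le {X : Type*} [SeminormedAddCommGroup X] {u g : ℕ → X} {δ : ℝ}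
    (hu : ∀ k, ‖u k‖ = 1) (hd : Summable fun k => ‖u k - g k‖)
    (hδ : ∑' k, ‖u k - g k‖ ≤ δ) (k : ℕ) : |‖g k‖ - 1| ≤ δ :=
  calc |‖g k‖ - 1| = |‖g k‖ - ‖u k‖| := by rw [hu k]
    _ ≤ ‖g k - u k‖ := abs_norm_sub_norm_le _ _
    _ = ‖u k - g k‖ := norm_sub_rev _ _
    _ ≤ δ := (hd.le_tsum k fun _ _ => norm_nonneg _).trans hδ

section AlmostDisjoint

variable {u g : ℕ → LinfSeq} {δ : ℝ}

lemma summable_smul_of_almost_disjoint (hg : IsDisjointSeqLinf g) (hu : ∀ k, ‖u k‖ = 1)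
    (hd : Summable fun k => ‖u k - g k‖) (hδ : ∑' k, ‖u k - g k‖ ≤ δ) (x : C₀(ℕ, ℝ)) :
    Summable fun k => x k • u k := by
  have hg_le : ∀ k, ‖g k‖ ≤ 1 + δ := fun k =>
    by linarith [(abs_sub_le_iff.1 (abs_norm_sub_one_le_of_tsum_le hu hd hδ k)).1]
  simpa only [← smul_add, add_sub_cancel] using
    (hg.summable_smul hg_le x).add (summable_smul_of_summable_norm hd x)

lemma abs_norm_tsum_smul_sub_norm_le (hg : IsDisjointSeqLinf g) (hu : ∀ k, ‖u k‖ = 1)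
    (hd : Summable fun k => ‖u k - g k‖) (hδ : ∑' k, ‖u k - g k‖ ≤ δ) (x : C₀(ℕ, ℝ)) :
    |‖∑' k, x k • u k‖ - ‖x‖| ≤ 2 * δ * ‖x‖ := by
  have hg_norm := abs_norm_sub_one_le_of_tsum_le hu hd hδ
  have hg_le : ∀ k, ‖g k‖ ≤ 1 + δ := fun k => by linarith [(abs_sub_le_iff.1 (hg_norm k)).1]
  have hg_ge : ∀ k, 1 - δ ≤ ‖g k‖ := fun k => by linarith [(abs_sub_le_iff.1 (hg_norm k)).2]
  have hsg := hg.summable_smul hg_le x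
  have hsplit : ∑' k, x k • u k - ∑' k, x k • g k = ∑' k, x k • (u k - g k) := by
    rw [← (summable_smul_of_almost_disjoint hg hu hd hδ x).tsum_sub hsg]
    simp only [smul_sub]
  have hdisj : |‖∑' k, x k • g k‖ - ‖x‖| ≤ δ * ‖x‖ := abs_sub_le_iff.2
    ⟨by linarith [hg.norm_tsum_smul_le hg_le x],
      by linarith [hg.mul_norm_le_norm_tsum_smul hg_ge x hsg]⟩
  have hpert : ‖∑' k, x k • u k - ∑' k, x k • g k‖ ≤ δ * ‖x‖ := by
    rw [hsplit, mul_comm]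
    exact (norm_tsum_smul_le_of_summable_norm hd x).trans
      (mul_le_mul_of_nonneg_left hδ (norm_nonneg x))
  calc |‖∑' k, x k • u k‖ - ‖x‖|
      ≤ |‖∑' k, x k • u k‖ - ‖∑' k, x k • g k‖| + |‖∑' k, x k • g k‖ - ‖x‖| := abs_sub_le _ _ _
    _ ≤ δ * ‖x‖ + δ * ‖x‖ := add_le_add ((abs_norm_sub_norm_le _ _).trans hpert) hdisj
    _ = 2 * δ * ‖x‖ := by ring

end AlmostDisjoint

/-- If a closed subspace `E` of `ℓ∞` is not dispersed (i.e. it contains an almost disjoint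
sequence: norm-one vectors `e_n ∈ E` approximated by a disjoint sequence `f_n` of `ℓ∞`),
then for every `ε > 0` there is an injective continuous linear operator `T : c₀ → E` with
`(1 − ε)‖x‖ ≤ ‖T x‖ ≤ (1 + ε)‖x‖` for all `x`; in particular `E` contains an almost
isometric copy of `c₀`. (Here `c₀ = C₀(ℕ, ℝ)` is the space of real sequences vanishing at
infinity, with the supremum norm.) -/
theorem nondispersed_subspace_of_linf_contains_c0
    (E : Submodule ℝ LinfSeq) (hEclosed : IsClosed (E : Set LinfSeq))
    (hnondisp : ∃ e : ℕ → LinfSeq, (∀ n, e n ∈ E) ∧ (∀ n, ‖e n‖ = 1) ∧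
      ∃ f : ℕ → LinfSeq, IsDisjointSeqLinf f ∧
        Tendsto (fun n => ‖f n - e n‖) atTop (nhds 0)) :
    ∀ ε : ℝ, 0 < ε → ∃ T : C₀(ℕ, ℝ) →L[ℝ] E, Function.Injective T ∧
      ∀ x : C₀(ℕ, ℝ), (1 - ε) * ‖x‖ ≤ ‖T x‖ ∧ ‖T x‖ ≤ (1 + ε) * ‖x‖ := by
  intro ε hε
  obtain ⟨e, heE, he, f, hf, hfe⟩ := hnondisp
  obtain ⟨δ, hδ0, hδε, hδ1⟩ : ∃ δ : ℝ, 0 < δ ∧ 2 * δ ≤ ε ∧ 2 * δ < 1 :=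
    ⟨min ε 1 / 4, by positivity, by linarith [min_le_left ε 1], by linarith [min_le_right ε 1]⟩
  obtain ⟨n, hn, hfen⟩ := extraction_forall_of_eventually fun k =>
    hfe.eventually_lt_const (by positivity : (0 : ℝ) < δ / 2 / 2 ^ k)
  have hd : ∀ k, ‖e (n k) - f (n k)‖ ≤ δ / 2 / 2 ^ k := fun k =>
    (norm_sub_rev _ _).trans_le (hfen k).le
  have hd_sum : Summable fun k => ‖e (n k) - f (n k)‖ :=
    (summable_geometric_two' δ).of_nonneg_of_le (fun _ => norm_nonneg _) hd
  have hδ_sum : ∑' k, ‖e (n k) - f (n k)‖ ≤ δ :=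
    (hd_sum.tsum_le_tsum hd (summable_geometric_two' δ)).trans_eq (tsum_geometric_two' δ)
  have hg := hf.comp_injective hn.injective
  have hu : ∀ k, ‖e (n k)‖ = 1 := fun k => he (n k)
  let T := (c0SeriesMap (e ∘ n) (summable_smul_of_almost_disjoint hg hu hd_sum hδ_sum)).codRestrict
    E fun x => tsum_mem hEclosed fun k => E.smul_mem _ (heE _)
  have hT x : |‖T x‖ - ‖x‖| ≤ 2 * δ * ‖x‖ := abs_norm_tsum_smul_sub_norm_le hg hu hd_sum hδ_sum x
  have hT_bounds x : (1 - ε) * ‖x‖ ≤ ‖T x‖ ∧ ‖T x‖ ≤ (1 + ε) * ‖x‖ := by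
    have := abs_sub_le_iff.1 (hT x)
    constructor <;> nlinarith [norm_nonneg x]
  refine ⟨T.mkContinuous (1 + ε) fun x => (hT_bounds x).2,
    (injective_iff_map_eq_zero _).2 fun x hx => norm_eq_zero.1 ?_, hT_bounds⟩
  have := hT x
  rw [LinearMap.mkContinuous_apply] at hx
  rw [hx, norm_zero, zero_sub, abs_neg, abs_norm] at this
  nlinarith [norm_nonneg x]
end
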